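/- arXiv:2406.05043 — 8 statements merged into one kernel-verified Lean document; each statement's English description precedes it below -/
import Mathlib

section
/- Let μ > 0 and let q : ℕ → ℝ satisfy q_n ≥ 0 for all n, ∑_{n=0}^∞ q_n = 1, ∑_{n=0}^∞ n·q_n = μ, and ∑_{n=0}^∞ n²·q_n < ∞. Then ∑_{n=0}^∞ F[q]_n = 0 and ∑_{n=0}^∞ n·F[q]_n = 0; in particular the total probability mass and the mean are conserved quantities of the dispersion generator. -/
/-!
With the flux `J = dispFlux q` (`J n = n q_n`, except `J 1 = 0`) and `q' = shiftRight q`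
(`q'_n = q_{n-1}`, `q'_0 = 0`), the generator is a difference of two discrete gradients,
`F[q]_n = (J_{n+1} - J_n) - (μ - q_1)(q'_{n+1} - q'_n)`. Both series therefore telescope: the first
to `-J 0 + (μ - q_1) q'_0 = 0`. For the second, summation by parts turns `∑ n (f_{n+1} - f_n)` into
`f_0 - ∑ f`, and `∑ J = μ - q_1`, `∑ q' = 1` give `-(μ - q_1) + (μ - q_1) = 0`; the second moment
is what makes `n J n` summable.
-/

/-- The generator of the mean-field dispersion process. -/
noncomputable def dispGen (μ : ℝ) (q : ℕ → ℝ) : ℕ → ℝ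
  | 0 => -(μ - q 1) * q 0
  | 1 => 2 * q 2 - (μ - q 1) * (q 1 - q 0)
  | n + 2 => ((n : ℝ) + 3) * q (n + 3) - ((n : ℝ) + 2) * q (n + 2)
      - (μ - q 1) * (q (n + 2) - q (n + 1))

section AddGroup

variable {G : Type*} [AddCommGroup G] [TopologicalSpace G] [IsTopologicalAddGroup G]
  {f : ℕ → G} {a : G}

theorem HasSum.nat_succ (hf : HasSum f a) : HasSum (fun n => f (n + 1)) (a - f 0) := by
  simpa using (hasSum_nat_add_iff' 1).mpr hf

theorem HasSum.succ_sub (hf : HasSum f a) : HasSum (fun n => f (n + 1) - f n) (-f 0) := by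
  simpa using hf.nat_succ.sub hf

end AddGroup

section Ring

variable {R : Type*} [Ring R] [TopologicalSpace R] [IsTopologicalRing R] {f : ℕ → R} {a : R}

theorem HasSum.natCast_mul_succ_sub (hf : HasSum f a)
    (hmul : Summable fun n : ℕ => (n : R) * f n) :
    HasSum (fun n : ℕ => (n : R) * (f (n + 1) - f n)) (f 0 - a) := by
  have h := hmul.hasSum.succ_sub.sub hf.nat_succ
  rw [Nat.cast_zero, zero_mul, neg_zero, zero_sub, neg_sub] at h
  refine h.congr_fun fun n => ?_
  push_cast
  noncomm_ring

end Ring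

def shiftRight {M : Type*} [Zero M] (q : ℕ → M) : ℕ → M
  | 0 => 0
  | n + 1 => q n

@[simp]
theorem shiftRight_zero {M : Type*} [Zero M] (q : ℕ → M) : shiftRight q 0 = 0 := rfl

theorem hasSum_shiftRight {M : Type*} [AddCommMonoid M] [TopologicalSpace M] [ContinuousAdd M]
    {q : ℕ → M} {a : M} (hq : HasSum q a) : HasSum (shiftRight q) a := by
  simpa using hq.zero_add (f := shiftRight q)

def dispFlux (q : ℕ → ℝ) (n : ℕ) : ℝ := if n = 1 then 0 else n * q n

@[simp]
theorem dispFlux_zero (q : ℕ → ℝ) : dispFlux q 0 = 0 := by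
  simp [dispFlux]

theorem dispGen_eq_dispFlux_sub_shiftRight (μ : ℝ) (q : ℕ → ℝ) (n : ℕ) :
    dispGen μ q n = (dispFlux q (n + 1) - dispFlux q n)
      - (μ - q 1) * (shiftRight q (n + 1) - shiftRight q n) := by
  match n with
  | 0 => simp [dispGen, dispFlux, shiftRight]; ring
  | 1 => simp [dispGen, dispFlux, shiftRight]
  | n + 2 =>
    simp only [dispGen, dispFlux, shiftRight, if_neg (by omega : n + 2 + 1 ≠ 1),
      if_neg (by omega : n + 2 ≠ 1)]
    push_cast
    ring

section Moments

variable {q : ℕ → ℝ} {b : ℝ}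

theorem summable_natCast_mul_shiftRight (hq : Summable q)
    (hmean : Summable fun n : ℕ => (n : ℝ) * q n) :
    Summable fun n : ℕ => (n : ℝ) * shiftRight q n := by
  refine (summable_nat_add_iff 1).mp ((hmean.add hq).congr fun n => ?_)
  simp [shiftRight]
  ring

theorem hasSum_dispFlux (hmean : HasSum (fun n : ℕ => (n : ℝ) * q n) b) :
    HasSum (dispFlux q) (b - q 1) := by
  refine (hmean.sub (hasSum_ite_eq 1 (q 1))).congr_fun fun n => ?_
  rcases eq_or_ne n 1 with rfl | hn <;> simp [dispFlux, *]

theorem summable_natCast_mul_dispFlux (hmom2 : Summable fun n : ℕ => (n : ℝ) ^ 2 * q n) :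
    Summable fun n : ℕ => (n : ℝ) * dispFlux q n := by
  refine (hmom2.sub (hasSum_ite_eq 1 (q 1)).summable).congr fun n => ?_
  rcases eq_or_ne n 1 with rfl | hn
  · simp [dispFlux]
  · simp [dispFlux, hn]
    ring

end Moments

theorem mass_and_mean_conservation_general (μ : ℝ) (q : ℕ → ℝ)
    (hmass : HasSum q 1)
    (hmean : HasSum (fun n : ℕ => (n : ℝ) * q n) μ)
    (hmom2 : Summable (fun n : ℕ => (n : ℝ) ^ 2 * q n)) :
    HasSum (fun n => dispGen μ q n) 0 ∧
    HasSum (fun n : ℕ => (n : ℝ) * dispGen μ q n) 0 := by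
  have hflux := hasSum_dispFlux hmean
  have hshift := hasSum_shiftRight hmass
  have hflux_mul := hflux.natCast_mul_succ_sub (summable_natCast_mul_dispFlux hmom2)
  have hshift_mul := hshift.natCast_mul_succ_sub
    (summable_natCast_mul_shiftRight hmass.summable hmean.summable)
  constructor
  · have h := (hflux.succ_sub.sub (hshift.succ_sub.mul_left (μ - q 1))).congr_fun
      (dispGen_eq_dispFlux_sub_shiftRight μ q)
    simpa using h
  · have h := (hflux_mul.sub (hshift_mul.mul_left (μ - q 1))).congr_fun
      (g := fun n : ℕ => (n : ℝ) * dispGen μ q n)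
      (fun n => by rw [dispGen_eq_dispFlux_sub_shiftRight]; ring)
    simpa using h

theorem mass_and_mean_conservation (μ : ℝ) (hμ : 0 < μ) (q : ℕ → ℝ)
    (hpos : ∀ n, 0 ≤ q n) (hmass : HasSum q 1)
    (hmean : HasSum (fun n : ℕ => (n : ℝ) * q n) μ)
    (hmom2 : Summable (fun n : ℕ => (n : ℝ) ^ 2 * q n)) :
    HasSum (fun n => dispGen μ q n) 0 ∧
    HasSum (fun n : ℕ => (n : ℝ) * dispGen μ q n) 0 :=
  mass_and_mean_conservation_general μ q hmass hmean hmom2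
end

section
/- Let μ ∈ (0,1]. A sequence q ∈ S_μ satisfies F[q]_n = 0 for all n ∈ ℕ if and only if q = p*, where p* is the Bernoulli distribution with mean μ. In other words, p* is the unique equilibrium of the mean-field dispersion system in S_μ when μ ∈ (0,1]. -/
/-- Membership in the state space `S_μ` of probability distributions on ℕ with mean `μ`. -/
def memS (μ : ℝ) (q : ℕ → ℝ) : Prop :=
  (∀ n, 0 ≤ q n ∧ q n ≤ 1) ∧ HasSum q 1 ∧ HasSum (fun n : ℕ => (n : ℝ) * q n) μ

/-- The Bernoulli distribution with mean `μ`. -/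
noncomputable def bern (μ : ℝ) : ℕ → ℝ
  | 0 => 1 - μ
  | 1 => μ
  | _ + 2 => 0

/-!
An equilibrium either has `q 1 = μ`, and then the equations `F[q]_n = 0` for `n ≥ 1` force
`(n + 1) q_{n+1} = n q_n` with `q_2 = 0`, so the tail vanishes; or `F[q]_0 = 0` forces `q 0 = 0`,
and then `∑ (n - 1) q_n = μ - 1 ≤ 0` is a sum of nonnegative terms, so again the tail vanishes.
-/

lemma dispGen_bern (μ : ℝ) (n : ℕ) : dispGen μ (bern μ) n = 0 := by
  rcases n with _ | _ | n <;> simp [dispGen, bern]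

lemma eq_bern_of_memS {μ : ℝ} {q : ℕ → ℝ} (hq : memS μ q) (htail : ∀ n, q (n + 2) = 0) :
    q = bern μ := by
  obtain ⟨-, hsum, hmean⟩ := hq
  have hzero : (fun n => q (n + 2)) = 0 := funext htail
  have hq01 : 1 - (q 0 + q 1) = 0 := by
    have := (hasSum_nat_add_iff' 2).mpr hsum
    rw [hzero] at this
    simpa [Finset.sum_range_succ] using this.unique hasSum_zero
  have hq1 : μ - q 1 = 0 := by
    have := (hasSum_nat_add_iff' 2).mpr hmean
    simp only [htail, mul_zero] at this
    simpa [Finset.sum_range_succ] using this.unique hasSum_zero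
  funext n
  rcases n with _ | _ | n
  · simp only [bern]; linarith
  · simp only [bern]; linarith
  · exact htail n

lemma tail_eq_zero_of_dispGen_eq_zero {μ : ℝ} {q : ℕ → ℝ} (h : ∀ n, dispGen μ q n = 0)
    (hq1 : q 1 = μ) (n : ℕ) : q (n + 2) = 0 := by
  have hc : μ - q 1 = 0 := by rw [hq1, sub_self]
  induction n with
  | zero =>
    have h1 := h 1
    simp only [dispGen, hc, zero_mul, sub_zero] at h1
    linarith
  | succ k ih =>
    have hk := h (k + 2)
    simp only [dispGen, hc, ih, zero_mul, mul_zero, sub_zero] at hk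
    have hk3 : (k : ℝ) + 3 ≠ 0 := by positivity
    exact (mul_eq_zero.mp hk).resolve_left hk3

lemma tail_eq_zero_of_memS_of_head_eq_zero {μ : ℝ} {q : ℕ → ℝ} (hq : memS μ q) (hμ : μ ≤ 1)
    (hq0 : q 0 = 0) (n : ℕ) : q (n + 2) = 0 := by
  obtain ⟨hbound, hsum, hmean⟩ := hq
  have hexcess : HasSum (fun n : ℕ => ((n : ℝ) - 1) * q n) (μ - 1) := by
    simpa only [sub_mul, one_mul] using hmean.sub hsum
  have hexcess_nonneg (m : ℕ) : 0 ≤ ((m : ℝ) - 1) * q m := by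
    rcases m with _ | m
    · simp [hq0]
    · exact mul_nonneg (by simp) (hbound _).1
  have hle : ((n : ℝ) + 1) * q (n + 2) ≤ 0 := by
    have := le_hasSum hexcess (n + 2) fun j _ => hexcess_nonneg j
    push_cast at this
    linarith
  have hn : (0 : ℝ) < n + 1 := by positivity
  exact le_antisymm (nonpos_of_mul_nonpos_right hle hn) (hbound _).1

theorem bernoulli_unique_equilibrium_general (μ : ℝ) (hμ1 : μ ≤ 1)
    (q : ℕ → ℝ) (hq : memS μ q) :
    (∀ n, dispGen μ q n = 0) ↔ q = bern μ := by
  constructor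
  · intro h
    refine eq_bern_of_memS hq ?_
    rcases eq_or_ne (q 1) μ with hq1 | hq1
    · exact tail_eq_zero_of_dispGen_eq_zero h hq1
    · have hq0 : q 0 = 0 := by
        have h0 := h 0
        simp only [dispGen, neg_mul, neg_eq_zero] at h0
        exact (mul_eq_zero.mp h0).resolve_left (sub_ne_zero.mpr hq1.symm)
      exact tail_eq_zero_of_memS_of_head_eq_zero hq hμ1 hq0
  · rintro rfl
    exact dispGen_bern μ

theorem bernoulli_unique_equilibrium (μ : ℝ) (hμ0 : 0 < μ) (hμ1 : μ ≤ 1)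
    (q : ℕ → ℝ) (hq : memS μ q) :
    (∀ n, dispGen μ q n = 0) ↔ q = bern μ :=
  bernoulli_unique_equilibrium_general μ hμ1 q hq
end

section
/- Let μ > 0 and let q ∈ S_μ satisfy ∑_{n=0}^∞ n³·q_n < ∞. Then the series ∑_{n=0}^∞ n²·F[q]_n converges absolutely and ∑_{n=0}^∞ n²·F[q]_n = −2·(∑_{n=0}^∞ n²·q_n − μ) + 2μ·(μ − q_1). In particular, along a classical solution p(t) of the mean-field dispersion system the energy E[p(t)] = ∑_{n=0}^∞ n²·p_n(t) − μ satisfies (d/dt)E[p(t)] = −2·E[p(t)] + 2μ·(μ − p_1(t)). -/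
/-- A classical solution of the mean-field dispersion system with mean `μ`. -/
def IsSol (μ : ℝ) (p : ℝ → ℕ → ℝ) : Prop :=
  (∀ t, 0 ≤ t → ∀ n, 0 ≤ p t n) ∧
  (∀ t, 0 ≤ t → HasSum (fun n => p t n) 1) ∧
  (∀ t, 0 ≤ t → HasSum (fun n : ℕ => (n : ℝ) * p t n) μ) ∧
  (∀ t, 0 ≤ t → ∀ n, HasDerivWithinAt (fun s => p s n) (dispGen μ (p t) n) (Set.Ici 0) t)

/-!
Write the generator as a backward difference, `F[q]_0 = D_0` and `F[q]_(n+1) = D_(n+1) - D_n`,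
of the flux `D_n = [n ≥ 1] (n+1) q_(n+1) - (μ - q_1) q_n` from `n + 1` down to `n`. Summation by
parts turns `∑ w_n F[q]_n` into `-∑ (w_(n+1) - w_n) D_n`; for `w_n = n²` this is
`-∑ (2n+1) D_n`, which the first two moments of `q` evaluate to the claimed value, while the third
moment makes the series summable.

Along a solution the second moment cannot be differentiated term by term, since the moments are
only known to be finite pointwise in time. The weights `truncSq N`, equal to `n²` up to `N` and
affine beyond, avoid this: as mass and mean are conserved, the truncated energies are finite sums
up to a constant, and their time derivatives `-∑ (2 min(n, N) + 1) D_n` are bounded above by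
`μ (2μ + 1)` and in absolute value by `2 M₂ + μ (2μ + 1)`. The upper bound gives an a priori bound
on the second moment `M₂`; dominated convergence then yields
`M₂(p b) - M₂(p a) = ∫_a^b rate`, so `M₂ ∘ p` is continuous, the rate is continuous, and the
fundamental theorem of calculus gives the derivative.
-/

open Finset Filter Set Topology MeasureTheory

/-- The flux `D_n` of mass from `n + 1` down to `n`. -/
noncomputable def flux (μ : ℝ) (q : ℕ → ℝ) : ℕ → ℝ
  | 0 => -(μ - q 1) * q 0
  | n + 1 => ((n : ℝ) + 2) * q (n + 2) - (μ - q 1) * q (n + 1)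

noncomputable def secondMoment (q : ℕ → ℝ) : ℝ := ∑' n : ℕ, (n : ℝ) ^ 2 * q n

noncomputable def energyRate (μ : ℝ) (q : ℕ → ℝ) : ℝ :=
  -2 * (secondMoment q - μ) + 2 * μ * (μ - q 1)

lemma dispGen_succ (μ : ℝ) (q : ℕ → ℝ) (n : ℕ) :
    dispGen μ q (n + 1) = flux μ q (n + 1) - flux μ q n := by
  rcases n with _ | n <;> simp only [dispGen, flux] <;> push_cast <;> ring

lemma hasSum_mul_dispGen {μ : ℝ} {q w : ℕ → ℝ} (h : Summable fun n => w n * flux μ q n)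
    (hs : Summable fun n => w (n + 1) * flux μ q n) :
    HasSum (fun n => w n * dispGen μ q n) (-∑' n, (w (n + 1) - w n) * flux μ q n) := by
  have hshift : HasSum (fun n => if n = 0 then 0 else w n * flux μ q (n - 1))
      (∑' n, w (n + 1) * flux μ q n) := by
    rw [← hasSum_nat_add_iff' 1]
    simpa using hs.hasSum
  have hterm : (fun n => w n * dispGen μ q n)
      = fun n => w n * flux μ q n - if n = 0 then 0 else w n * flux μ q (n - 1) := by
    funext n
    rcases n with _ | n
    · simp [dispGen, flux]
    · simp [dispGen_succ]
      ring
  have hval : -∑' n, (w (n + 1) - w n) * flux μ q n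
      = ∑' n, w n * flux μ q n - ∑' n, w (n + 1) * flux μ q n := by
    simp_rw [sub_mul]
    rw [hs.tsum_sub h]
    ring
  rw [hterm, hval]
  exact h.hasSum.sub hshift

lemma hasSum_mul_flux {μ A B : ℝ} {q w : ℕ → ℝ}
    (hA : HasSum (fun n => w n * (((n : ℝ) + 1) * q (n + 1))) A)
    (hB : HasSum (fun n => w n * q n) B) :
    HasSum (fun n => w n * flux μ q n) (A - w 0 * q 1 - (μ - q 1) * B) := by
  have hterm : (fun n => w n * flux μ q n) = fun n =>
      w n * (((n : ℝ) + 1) * q (n + 1)) - (if n = 0 then w 0 * q 1 else 0)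
        - (μ - q 1) * (w n * q n) := by
    funext n
    rcases n with _ | n
    · simp [flux]
      ring
    · simp [flux]
      ring
  rw [hterm]
  exact (hA.sub (hasSum_ite_eq 0 (w 0 * q 1))).sub (hB.mul_left (μ - q 1))

lemma summable_pow_mul_of_summable_pow_succ_mul {q : ℕ → ℝ} (hq : ∀ n, 0 ≤ q n)
    (h0 : Summable q) {k : ℕ} (h : Summable fun n : ℕ => (n : ℝ) ^ (k + 1) * q n) :
    Summable fun n : ℕ => (n : ℝ) ^ k * q n := by
  refine Summable.of_nonneg_of_le (fun n : ℕ => mul_nonneg (by positivity) (hq n))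
    (fun n : ℕ => ?_) (h.add h0)
  have hpow : (n : ℝ) ^ k ≤ (n : ℝ) ^ (k + 1) + 1 := by
    rcases n.eq_zero_or_pos with rfl | hn
    · rcases k with _ | k <;> simp
    · have : (1 : ℝ) ≤ n := by exact_mod_cast hn
      linarith [pow_le_pow_right₀ this (by omega : k ≤ k + 1)]
  nlinarith [hq n]

section memS

variable {μ : ℝ} {q : ℕ → ℝ}

lemma memS.apply_one_le (hq : memS μ q) : q 1 ≤ μ := by
  simpa using le_hasSum hq.2.2 1 fun n _ => mul_nonneg n.cast_nonneg (hq.1 n).1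

lemma memS.mean_nonneg (hq : memS μ q) : 0 ≤ μ := (hq.1 1).1.trans hq.apply_one_le

lemma memS.neg_flux_le (hq : memS μ q) (n : ℕ) : -flux μ q n ≤ μ * q n := by
  have := hq.apply_one_le
  rcases n with _ | n
  · simp only [flux]
    nlinarith [(hq.1 0).1, (hq.1 1).1]
  · simp only [flux]
    nlinarith [(hq.1 (n + 1)).1, (hq.1 1).1, (hq.1 (n + 2)).1]

lemma memS.abs_flux_le (hq : memS μ q) (n : ℕ) :
    |flux μ q n| ≤ ((n : ℝ) + 1) * q (n + 1) + μ * q n := by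
  have := hq.apply_one_le
  rcases n with _ | n
  · simp only [flux]
    rw [abs_le]
    constructor <;> nlinarith [(hq.1 0).1, (hq.1 1).1]
  · simp only [flux]
    push_cast
    rw [abs_le]
    constructor <;> nlinarith [(hq.1 (n + 1)).1, (hq.1 1).1, (hq.1 (n + 2)).1]

lemma memS.summable_pow_mul_flux (hq : memS μ q) {k : ℕ}
    (hk : Summable fun n : ℕ => (n : ℝ) ^ (k + 1) * q n) :
    Summable fun n : ℕ => (n : ℝ) ^ k * flux μ q n := by
  have hk' := summable_pow_mul_of_summable_pow_succ_mul (fun n => (hq.1 n).1) hq.2.1.summable hk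
  have hshift : Summable fun n : ℕ => ((n : ℝ) + 1) ^ (k + 1) * q (n + 1) := by
    simpa using (summable_nat_add_iff 1).mpr hk
  refine Summable.of_norm_bounded (hshift.add (hk'.mul_left μ)) fun n => ?_
  have hpow : (n : ℝ) ^ k * ((n : ℝ) + 1) ≤ ((n : ℝ) + 1) ^ (k + 1) := by
    rw [pow_succ]
    gcongr
    linarith
  have hq0 := (hq.1 n).1
  have hq1 := (hq.1 (n + 1)).1
  rw [Real.norm_eq_abs, abs_mul, abs_of_nonneg (by positivity)]
  calc (n : ℝ) ^ k * |flux μ q n| ≤ (n : ℝ) ^ k * (((n : ℝ) + 1) * q (n + 1) + μ * q n) :=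
        mul_le_mul_of_nonneg_left (hq.abs_flux_le n) (by positivity)
    _ ≤ ((n : ℝ) + 1) ^ (k + 1) * q (n + 1) + μ * ((n : ℝ) ^ k * q n) := by
        nlinarith [mul_le_mul_of_nonneg_right hpow hq1]

lemma memS.hasSum_flux (hq : memS μ q) : HasSum (flux μ q) 0 := by
  have hA : HasSum (fun n : ℕ => 1 * (((n : ℝ) + 1) * q (n + 1))) μ := by
    simpa using (hasSum_nat_add_iff' 1).mpr hq.2.2
  have h := hasSum_mul_flux (μ := μ) hA (by simpa using hq.2.1)
  rw [show μ - 1 * q 1 - (μ - q 1) * 1 = 0 by ring] at h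
  simpa using h

lemma memS.hasSum_two_mul_add_one_mul (hq : memS μ q) :
    HasSum (fun n : ℕ => (2 * (n : ℝ) + 1) * q n) (2 * μ + 1) :=
  ((hq.2.2.mul_left 2).add hq.2.1).congr_fun fun n => by ring

lemma memS.hasSum_two_mul_add_one_mul_flux (hq : memS μ q)
    (h2 : Summable fun n : ℕ => (n : ℝ) ^ 2 * q n) :
    HasSum (fun n : ℕ => (2 * (n : ℝ) + 1) * flux μ q n)
      (2 * (secondMoment q - μ) - 2 * μ * (μ - q 1)) := by
  have hA : HasSum (fun n : ℕ => (2 * (n : ℝ) + 1) * (((n : ℝ) + 1) * q (n + 1)))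
      (2 * secondMoment q - μ) := by
    have h := (h2.hasSum.mul_left 2).sub hq.2.2
    rw [← hasSum_nat_add_iff' 1] at h
    simpa [secondMoment] using h.congr_fun fun n => by push_cast; ring
  convert hasSum_mul_flux hA hq.hasSum_two_mul_add_one_mul using 1
  simp
  ring

lemma memS.hasSum_sq_mul_dispGen (hq : memS μ q)
    (h3 : Summable fun n : ℕ => (n : ℝ) ^ 3 * q n) :
    HasSum (fun n : ℕ => (n : ℝ) ^ 2 * dispGen μ q n) (energyRate μ q) := by
  have h2 := summable_pow_mul_of_summable_pow_succ_mul (fun n => (hq.1 n).1) hq.2.1.summable h3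
  have hD2 := hq.summable_pow_mul_flux h3
  have hD1 : Summable fun n : ℕ => (n : ℝ) * flux μ q n := by
    simpa using hq.summable_pow_mul_flux (k := 1) h2
  have hD0 := hq.hasSum_flux.summable
  have hsucc : Summable fun n : ℕ => ((n + 1 : ℕ) : ℝ) ^ 2 * flux μ q n := by
    refine (hD2.add ((hD1.mul_left 2).add hD0)).congr fun n => ?_
    push_cast
    ring
  convert hasSum_mul_dispGen hD2 hsucc using 1
  have hcoeff : ∀ n : ℕ, (((n + 1 : ℕ) : ℝ) ^ 2 - (n : ℝ) ^ 2) * flux μ q n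
      = (2 * (n : ℝ) + 1) * flux μ q n := fun n => by push_cast; ring
  simp_rw [hcoeff, (hq.hasSum_two_mul_add_one_mul_flux h2).tsum_eq, energyRate]
  ring

lemma memS.hasSum_dispGen (hq : memS μ q) : HasSum (dispGen μ q) 0 := by
  have h : Summable fun n => (1 : ℝ) * flux μ q n := by simpa using hq.hasSum_flux.summable
  simpa using hasSum_mul_dispGen (w := fun _ => 1) h h

lemma memS.hasSum_natCast_mul_dispGen (hq : memS μ q)
    (h2 : Summable fun n : ℕ => (n : ℝ) ^ 2 * q n) :
    HasSum (fun n : ℕ => (n : ℝ) * dispGen μ q n) 0 := by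
  have hD1 : Summable fun n : ℕ => (n : ℝ) * flux μ q n := by
    simpa using hq.summable_pow_mul_flux (k := 1) h2
  have hsucc : Summable fun n : ℕ => ((n + 1 : ℕ) : ℝ) * flux μ q n :=
    (hD1.add hq.hasSum_flux.summable).congr fun n => by push_cast; ring
  simpa [hq.hasSum_flux.tsum_eq] using hasSum_mul_dispGen hD1 hsucc

lemma memS.neg_mul_flux_le (hq : memS μ q) {n : ℕ} {a : ℝ} (ha : 0 ≤ a)
    (ha' : a ≤ 2 * n + 1) : -(a * flux μ q n) ≤ μ * ((2 * n + 1) * q n) := by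
  have hμq : 0 ≤ μ * q n := mul_nonneg hq.mean_nonneg (hq.1 n).1
  nlinarith [hq.neg_flux_le n]

lemma memS.abs_mul_flux_le (hq : memS μ q) {n : ℕ} {a : ℝ} (ha : 0 ≤ a)
    (ha' : a ≤ 2 * n + 1) :
    |a * flux μ q n| ≤ 2 * (((n : ℝ) + 1) ^ 2 * q (n + 1)) + μ * ((2 * n + 1) * q n) := by
  have hμq : 0 ≤ μ * q n := mul_nonneg hq.mean_nonneg (hq.1 n).1
  have hq1 := (hq.1 (n + 1)).1
  rw [abs_mul, abs_of_nonneg ha]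
  nlinarith [hq.abs_flux_le n, abs_nonneg (flux μ q n)]

lemma memS.hasSum_flux_bound (hq : memS μ q) (h2 : Summable fun n : ℕ => (n : ℝ) ^ 2 * q n) :
    HasSum (fun n : ℕ => 2 * (((n : ℝ) + 1) ^ 2 * q (n + 1)) + μ * ((2 * n + 1) * q n))
      (2 * secondMoment q + μ * (2 * μ + 1)) := by
  have h : HasSum (fun n : ℕ => ((n : ℝ) + 1) ^ 2 * q (n + 1)) (secondMoment q) := by
    have h := h2.hasSum
    rw [← hasSum_nat_add_iff' 1] at h
    simpa [secondMoment] using h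
  exact (h.mul_left 2).add (hq.hasSum_two_mul_add_one_mul.mul_left μ)

end memS

noncomputable def truncSq (N n : ℕ) : ℝ :=
  if n ≤ N then (n : ℝ) ^ 2 else (2 * N + 1) * n - N * (N + 1)

section truncSq

variable {N n : ℕ}

lemma truncSq_of_le (h : n ≤ N) : truncSq N n = (n : ℝ) ^ 2 := if_pos h

lemma truncSq_of_ge (h : N ≤ n) : truncSq N n = (2 * N + 1) * n - N * (N + 1) := by
  unfold truncSq
  split_ifs with h'
  · obtain rfl : n = N := le_antisymm h' h
    ring
  · rfl

lemma truncSq_succ_sub (N n : ℕ) :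
    truncSq N (n + 1) - truncSq N n = 2 * ((min n N : ℕ) : ℝ) + 1 := by
  rcases le_or_gt N n with h | h
  · rw [truncSq_of_ge h, truncSq_of_ge (by omega), min_eq_right h]
    push_cast
    ring
  · rw [truncSq_of_le h, truncSq_of_le h.le, min_eq_left h.le]
    push_cast
    ring

lemma truncSq_nonneg : 0 ≤ truncSq N n := by
  rcases le_or_gt n N with h | h
  · rw [truncSq_of_le h]
    positivity
  · rw [truncSq_of_ge h.le]
    have : (N : ℝ) + 1 ≤ n := by exact_mod_cast h
    nlinarith

lemma truncSq_le_sq : truncSq N n ≤ (n : ℝ) ^ 2 := by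
  rcases le_or_gt n N with h | h
  · rw [truncSq_of_le h]
  · rw [truncSq_of_ge h.le]
    have : (N : ℝ) + 1 ≤ n := by exact_mod_cast h
    nlinarith

lemma truncSq_le_mul : truncSq N n ≤ (2 * N + 1) * n := by
  rcases le_or_gt n N with h | h
  · rw [truncSq_of_le h]
    have : (n : ℝ) ≤ N := by exact_mod_cast h
    nlinarith [n.cast_nonneg (α := ℝ)]
  · rw [truncSq_of_ge h.le]
    nlinarith [N.cast_nonneg (α := ℝ)]

end truncSq

section truncated

variable {μ : ℝ} {q : ℕ → ℝ}

lemma memS.hasSum_truncSq_mul_dispGen (hq : memS μ q)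
    (h2 : Summable fun n : ℕ => (n : ℝ) ^ 2 * q n) (N : ℕ) :
    HasSum (fun n => truncSq N n * dispGen μ q n)
      (-∑' n : ℕ, (2 * ((min n N : ℕ) : ℝ) + 1) * flux μ q n) := by
  have hD1 : Summable fun n : ℕ => (n : ℝ) * flux μ q n := by
    simpa using hq.summable_pow_mul_flux (k := 1) h2
  have hD0 := hq.hasSum_flux.summable
  have hτ : Summable fun n => truncSq N n * flux μ q n := by
    refine Summable.of_norm_bounded (hD1.abs.mul_left (2 * (N : ℝ) + 1)) fun n => ?_
    rw [Real.norm_eq_abs, abs_mul, abs_mul, abs_of_nonneg truncSq_nonneg, Nat.abs_cast,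
      ← mul_assoc]
    exact mul_le_mul_of_nonneg_right truncSq_le_mul (abs_nonneg _)
  have hτsucc : Summable fun n => truncSq N (n + 1) * flux μ q n := by
    refine Summable.of_norm_bounded ((hD1.abs.add hD0.abs).mul_left (2 * (N : ℝ) + 1)) fun n => ?_
    rw [Real.norm_eq_abs, abs_mul, abs_mul, abs_of_nonneg truncSq_nonneg, Nat.abs_cast]
    calc truncSq N (n + 1) * |flux μ q n| ≤ (2 * N + 1) * ((n : ℝ) + 1) * |flux μ q n| := by
          refine mul_le_mul_of_nonneg_right ?_ (abs_nonneg _)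
          simpa using truncSq_le_mul (N := N) (n := n + 1)
      _ = (2 * N + 1) * (n * |flux μ q n| + |flux μ q n|) := by ring
  simpa only [truncSq_succ_sub] using hasSum_mul_dispGen hτ hτsucc

lemma memS.tsum_truncSq_mul_dispGen_le (hq : memS μ q)
    (h2 : Summable fun n : ℕ => (n : ℝ) ^ 2 * q n) (N : ℕ) :
    ∑' n, truncSq N n * dispGen μ q n ≤ μ * (2 * μ + 1) := by
  have hbound := hq.hasSum_flux_bound h2
  have hle : ∀ n : ℕ, (2 * ((min n N : ℕ) : ℝ) + 1) ≤ 2 * n + 1 := fun n => by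
    have : ((min n N : ℕ) : ℝ) ≤ n := by exact_mod_cast min_le_left n N
    linarith
  have hsum : Summable fun n : ℕ => -((2 * ((min n N : ℕ) : ℝ) + 1) * flux μ q n) :=
    (Summable.of_norm_bounded hbound.summable fun n =>
      hq.abs_mul_flux_le (by positivity) (hle n)).neg
  rw [(hq.hasSum_truncSq_mul_dispGen h2 N).tsum_eq, ← tsum_neg,
    ← (hq.hasSum_two_mul_add_one_mul.mul_left μ).tsum_eq]
  exact hsum.tsum_le_tsum (fun n => hq.neg_mul_flux_le (by positivity) (hle n))
    (hq.hasSum_two_mul_add_one_mul.mul_left μ).summable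

lemma memS.abs_tsum_truncSq_mul_dispGen_le (hq : memS μ q)
    (h2 : Summable fun n : ℕ => (n : ℝ) ^ 2 * q n) (N : ℕ) :
    |∑' n, truncSq N n * dispGen μ q n| ≤ 2 * secondMoment q + μ * (2 * μ + 1) := by
  rw [(hq.hasSum_truncSq_mul_dispGen h2 N).tsum_eq, abs_neg, ← Real.norm_eq_abs]
  refine tsum_of_norm_bounded (hq.hasSum_flux_bound h2) fun n => ?_
  refine hq.abs_mul_flux_le (by positivity) ?_
  have : ((min n N : ℕ) : ℝ) ≤ n := by exact_mod_cast min_le_left n N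
  linarith

lemma memS.tendsto_tsum_truncSq_mul_dispGen (hq : memS μ q)
    (h2 : Summable fun n : ℕ => (n : ℝ) ^ 2 * q n) :
    Tendsto (fun N => ∑' n, truncSq N n * dispGen μ q n) atTop (𝓝 (energyRate μ q)) := by
  have hrate : energyRate μ q = -∑' n : ℕ, (2 * (n : ℝ) + 1) * flux μ q n := by
    rw [(hq.hasSum_two_mul_add_one_mul_flux h2).tsum_eq, energyRate]
    ring
  simp_rw [(hq.hasSum_truncSq_mul_dispGen h2 _).tsum_eq, hrate]
  refine (tendsto_tsum_of_dominated_convergence (hq.hasSum_flux_bound h2).summable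
    (fun n => ?_) (Eventually.of_forall fun N n => ?_)).neg
  · refine tendsto_const_nhds.congr' ((eventually_ge_atTop n).mono fun N hN => ?_)
    dsimp only
    rw [min_eq_left hN]
  · refine hq.abs_mul_flux_le (by positivity) ?_
    have : ((min n N : ℕ) : ℝ) ≤ n := by exact_mod_cast min_le_left n N
    linarith

lemma memS.abs_energyRate_le (hq : memS μ q) (h2 : Summable fun n : ℕ => (n : ℝ) ^ 2 * q n) :
    |energyRate μ q| ≤ 2 * secondMoment q + μ * (2 * μ + 1) :=
  le_of_tendsto' (hq.tendsto_tsum_truncSq_mul_dispGen h2).abs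
    (hq.abs_tsum_truncSq_mul_dispGen_le h2)

lemma tsum_truncSq_mul_le (hq : ∀ n, 0 ≤ q n) (h2 : Summable fun n : ℕ => (n : ℝ) ^ 2 * q n)
    (N : ℕ) : ∑' n, truncSq N n * q n ≤ secondMoment q :=
  Summable.tsum_le_tsum (fun n => mul_le_mul_of_nonneg_right truncSq_le_sq (hq n))
    (Summable.of_nonneg_of_le (fun n => mul_nonneg truncSq_nonneg (hq n))
      (fun n => mul_le_mul_of_nonneg_right truncSq_le_sq (hq n)) h2) h2

lemma tendsto_tsum_truncSq_mul (hq : ∀ n, 0 ≤ q n)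
    (h2 : Summable fun n : ℕ => (n : ℝ) ^ 2 * q n) :
    Tendsto (fun N => ∑' n, truncSq N n * q n) atTop (𝓝 (secondMoment q)) := by
  refine tendsto_tsum_of_dominated_convergence h2 (fun n => ?_)
    (Eventually.of_forall fun N n => ?_)
  · refine tendsto_const_nhds.congr' ((eventually_ge_atTop n).mono fun N hN => ?_)
    dsimp only
    rw [truncSq_of_le hN]
  · rw [Real.norm_eq_abs, abs_of_nonneg (mul_nonneg truncSq_nonneg (hq n))]
    exact mul_le_mul_of_nonneg_right truncSq_le_sq (hq n)

end truncated

lemma tsum_mul_eq_sum_add_of_affine {w q : ℕ → ℝ} {α β m₀ m₁ : ℝ} {N : ℕ}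
    (hw : ∀ n, N ≤ n → w n = α * n + β) (h₀ : HasSum q m₀)
    (h₁ : HasSum (fun n : ℕ => (n : ℝ) * q n) m₁) :
    ∑' n, w n * q n
      = ∑ n ∈ range N, (w n - (α * n + β)) * q n + (α * m₁ + β * m₀) := by
  have hfin : HasSum (fun n => (w n - (α * n + β)) * q n)
      (∑ n ∈ range N, (w n - (α * n + β)) * q n) :=
    hasSum_sum_of_ne_finset_zero fun n hn => by
      rw [hw n (by simpa using hn), sub_self, zero_mul]
  exact ((hfin.add ((h₁.mul_left α).add (h₀.mul_left β))).congr_fun fun n => by ring).tsum_eq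

lemma Icc_mem_nhdsWithin_Ici_add_one (a t : ℝ) : Icc a (t + 1) ∈ 𝓝[Ici a] t :=
  mem_nhdsWithin.2 ⟨Iio (t + 1), isOpen_Iio, lt_add_one t, fun _ hx => ⟨hx.2, hx.1.le⟩⟩

section primitive

variable {f g : ℝ → ℝ} {a : ℝ}

lemma continuousOn_Ici_of_sub_eq_integral (hfg : ∀ t, a ≤ t → f t - f a = ∫ u in a..t, g u)
    (hg : ∀ t, a ≤ t → IntervalIntegrable g volume a t) : ContinuousOn f (Ici a) := by
  intro t ht
  have hprim : ContinuousOn (fun s => f a + ∫ u in a..s, g u) (Icc a (t + 1)) := by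
    have h := intervalIntegral.continuousOn_primitive_interval' (hg (t + 1) (by linarith [ht.out]))
      left_mem_uIcc
    rw [Set.uIcc_of_le (by linarith [ht.out])] at h
    exact continuousOn_const.add h
  have hf : ContinuousOn f (Icc a (t + 1)) :=
    hprim.congr fun s hs => by linarith [hfg s hs.1]
  exact (hf t ⟨ht, by linarith⟩).mono_of_mem_nhdsWithin (Icc_mem_nhdsWithin_Ici_add_one a t)

lemma hasDerivWithinAt_Ici_of_sub_eq_integral
    (hfg : ∀ t, a ≤ t → f t - f a = ∫ u in a..t, g u) (hg : ContinuousOn g (Ici a))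
    {t : ℝ} (ht : a ≤ t) : HasDerivWithinAt f (g t) (Ici a) t := by
  have ht' : Fact (t ∈ Icc a (t + 1)) := ⟨⟨ht, by linarith⟩⟩
  have hg' : ContinuousOn g (Icc a (t + 1)) := hg.mono Icc_subset_Ici_self
  have hint : IntervalIntegrable g volume a t := by
    refine (hg'.mono ?_).intervalIntegrable
    rw [Set.uIcc_of_le ht]
    exact Icc_subset_Icc_right (by linarith)
  have hprim : HasDerivWithinAt (fun s => f a + ∫ u in a..s, g u) (g t) (Icc a (t + 1)) t :=
    (intervalIntegral.integral_hasDerivWithinAt_right hint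
      (hg'.stronglyMeasurableAtFilter_nhdsWithin measurableSet_Icc t) (hg' t ht'.out)).const_add _
  exact (hprim.congr_of_mem (fun s hs => by linarith [hfg s hs.1]) ht'.out).mono_of_mem_nhdsWithin
    (Icc_mem_nhdsWithin_Ici_add_one a t)

end primitive

section solution

variable {μ : ℝ} {p : ℝ → ℕ → ℝ}

lemma IsSol.memS (hp : IsSol μ p) {t : ℝ} (ht : 0 ≤ t) : memS μ (p t) :=
  ⟨fun n => ⟨hp.1 t ht n, le_hasSum (hp.2.1 t ht) n fun m _ => hp.1 t ht m⟩, hp.2.1 t ht,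
    hp.2.2.1 t ht⟩

lemma IsSol.continuousOn (hp : IsSol μ p) (n : ℕ) : ContinuousOn (fun s => p s n) (Ici 0) :=
  fun t ht => (hp.2.2.2 t ht n).continuousWithinAt

lemma IsSol.continuousOn_dispGen (hp : IsSol μ p) (n : ℕ) :
    ContinuousOn (fun s => dispGen μ (p s) n) (Ici 0) := by
  have hc := hp.continuousOn
  rcases n with _ | _ | n <;> simp only [dispGen]
  · exact (continuousOn_const.sub (hc 1)).neg.mul (hc 0)
  · exact (continuousOn_const.mul (hc 2)).sub
      ((continuousOn_const.sub (hc 1)).mul ((hc 1).sub (hc 0)))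
  · exact ((continuousOn_const.mul (hc (n + 3))).sub (continuousOn_const.mul (hc (n + 2)))).sub
      ((continuousOn_const.sub (hc 1)).mul ((hc (n + 2)).sub (hc (n + 1))))

section affine

variable {w : ℕ → ℝ} {α β : ℝ} {N : ℕ}

lemma IsSol.hasDerivWithinAt_tsum_mul (hp : IsSol μ p) (hw : ∀ n, N ≤ n → w n = α * n + β)
    {t : ℝ} (ht : 0 ≤ t) (h2 : Summable fun n : ℕ => (n : ℝ) ^ 2 * p t n) :
    HasDerivWithinAt (fun s => ∑' n, w n * p s n) (∑' n, w n * dispGen μ (p t) n)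
      (Ici 0) t := by
  rw [tsum_mul_eq_sum_add_of_affine hw (hp.memS ht).hasSum_dispGen
    ((hp.memS ht).hasSum_natCast_mul_dispGen h2), mul_zero, mul_zero, add_zero, add_zero]
  refine ((HasDerivWithinAt.fun_sum fun n _ => (hp.2.2.2 t ht n).const_mul _).add_const
    (α * μ + β * 1)).congr_of_mem (fun s hs => ?_) ht
  exact tsum_mul_eq_sum_add_of_affine hw (hp.2.1 s hs) (hp.2.2.1 s hs)

lemma IsSol.continuousOn_tsum_mul_dispGen (hp : IsSol μ p)
    (hw : ∀ n, N ≤ n → w n = α * n + β)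
    (h2 : ∀ t, 0 ≤ t → Summable fun n : ℕ => (n : ℝ) ^ 2 * p t n) :
    ContinuousOn (fun s => ∑' n, w n * dispGen μ (p s) n) (Ici 0) := by
  have hsum : ContinuousOn
      (fun s => ∑ n ∈ range N, (w n - (α * n + β)) * dispGen μ (p s) n) (Ici 0) :=
    continuousOn_finsetSum _ fun n _ => continuousOn_const.mul (hp.continuousOn_dispGen n)
  refine hsum.congr fun s hs => ?_
  rw [tsum_mul_eq_sum_add_of_affine hw (hp.memS hs).hasSum_dispGen
    ((hp.memS hs).hasSum_natCast_mul_dispGen (h2 s hs))]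
  simp

lemma IsSol.tsum_mul_sub_eq_integral (hp : IsSol μ p) (hw : ∀ n, N ≤ n → w n = α * n + β)
    (h2 : ∀ t, 0 ≤ t → Summable fun n : ℕ => (n : ℝ) ^ 2 * p t n) {a b : ℝ}
    (ha : 0 ≤ a) (hab : a ≤ b) :
    ∑' n, w n * p b n - ∑' n, w n * p a n
      = ∫ u in a..b, ∑' n, w n * dispGen μ (p u) n := by
  have hderiv : ∀ x, a ≤ x → HasDerivWithinAt (fun s => ∑' n, w n * p s n)
      (∑' n, w n * dispGen μ (p x) n) (Ici 0) x := fun x hx =>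
    hp.hasDerivWithinAt_tsum_mul hw (ha.trans hx) (h2 x (ha.trans hx))
  refine (intervalIntegral.integral_eq_sub_of_hasDeriv_right_of_le hab
    (fun x hx => (hderiv x hx.1).continuousWithinAt.mono fun y hy => ha.trans hy.1)
    (fun x hx => (hderiv x hx.1.le).mono fun y hy => ha.trans (hx.1.trans hy).le)
    ((hp.continuousOn_tsum_mul_dispGen hw h2).mono ?_).intervalIntegrable).symm
  rw [Set.uIcc_of_le hab]
  exact fun y hy => ha.trans hy.1

end affine

lemma IsSol.tsum_truncSq_mul_sub_eq_integral (hp : IsSol μ p)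
    (h2 : ∀ t, 0 ≤ t → Summable fun n : ℕ => (n : ℝ) ^ 2 * p t n) (N : ℕ) {a b : ℝ}
    (ha : 0 ≤ a) (hab : a ≤ b) :
    ∑' n, truncSq N n * p b n - ∑' n, truncSq N n * p a n
      = ∫ u in a..b, ∑' n, truncSq N n * dispGen μ (p u) n :=
  hp.tsum_mul_sub_eq_integral (α := 2 * N + 1) (β := -(N * (N + 1)))
    (fun n hn => by rw [truncSq_of_ge hn]; ring) h2 ha hab

lemma IsSol.continuousOn_tsum_truncSq_mul_dispGen (hp : IsSol μ p)
    (h2 : ∀ t, 0 ≤ t → Summable fun n : ℕ => (n : ℝ) ^ 2 * p t n) (N : ℕ) :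
    ContinuousOn (fun s => ∑' n, truncSq N n * dispGen μ (p s) n) (Ici 0) :=
  hp.continuousOn_tsum_mul_dispGen (α := 2 * N + 1) (β := -(N * (N + 1)))
    (fun n hn => by rw [truncSq_of_ge hn]; ring) h2

lemma IsSol.secondMoment_le (hp : IsSol μ p)
    (h2 : ∀ t, 0 ≤ t → Summable fun n : ℕ => (n : ℝ) ^ 2 * p t n) {t T : ℝ}
    (ht : 0 ≤ t) (htT : t ≤ T) :
    secondMoment (p t) ≤ secondMoment (p 0) + μ * (2 * μ + 1) * T := by
  refine le_of_tendsto' (tendsto_tsum_truncSq_mul (hp.1 t ht) (h2 t ht)) fun N => ?_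
  have hint : ∫ u in (0 : ℝ)..t, ∑' n, truncSq N n * dispGen μ (p u) n
      ≤ μ * (2 * μ + 1) * t := by
    refine (intervalIntegral.integral_mono_on ht
      ((hp.continuousOn_tsum_truncSq_mul_dispGen h2 N).mono ?_).intervalIntegrable
      intervalIntegrable_const fun u hu =>
        (hp.memS hu.1).tsum_truncSq_mul_dispGen_le (h2 u hu.1) N).trans_eq ?_
    · rw [Set.uIcc_of_le ht]
      exact Icc_subset_Ici_self
    · simp only [intervalIntegral.integral_const, sub_zero, smul_eq_mul]
      ring
  have hK : μ * (2 * μ + 1) * t ≤ μ * (2 * μ + 1) * T :=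
    mul_le_mul_of_nonneg_left htT (by have := (hp.memS ht).mean_nonneg; positivity)
  linarith [hp.tsum_truncSq_mul_sub_eq_integral h2 N le_rfl ht,
    tsum_truncSq_mul_le (hp.1 0 le_rfl) (h2 0 le_rfl) N]

lemma IsSol.secondMoment_sub_eq_integral (hp : IsSol μ p)
    (h2 : ∀ t, 0 ≤ t → Summable fun n : ℕ => (n : ℝ) ^ 2 * p t n) {a b : ℝ}
    (ha : 0 ≤ a) (hab : a ≤ b) :
    secondMoment (p b) - secondMoment (p a) = ∫ u in a..b, energyRate μ (p u) := by
  have hsub : Set.uIoc a b ⊆ Ici 0 := by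
    rw [Set.uIoc_of_le hab]
    exact fun x hx => ha.trans hx.1.le
  refine tendsto_nhds_unique ((tendsto_tsum_truncSq_mul (hp.1 b (ha.trans hab))
    (h2 b (ha.trans hab))).sub (tendsto_tsum_truncSq_mul (hp.1 a ha) (h2 a ha))) ?_
  simp_rw [hp.tsum_truncSq_mul_sub_eq_integral h2 _ ha hab]
  refine intervalIntegral.tendsto_integral_filter_of_dominated_convergence
    (fun _ => 2 * (secondMoment (p 0) + μ * (2 * μ + 1) * b) + μ * (2 * μ + 1))
    (Eventually.of_forall fun N =>
      ((hp.continuousOn_tsum_truncSq_mul_dispGen h2 N).aestronglyMeasurable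
        measurableSet_Ici).mono_measure (Measure.restrict_mono hsub le_rfl))
    (Eventually.of_forall fun N => ae_of_all _ fun u hu => ?_) intervalIntegrable_const
    (ae_of_all _ fun u hu =>
      (hp.memS (hsub hu)).tendsto_tsum_truncSq_mul_dispGen (h2 u (hsub hu)))
  have hub : u ≤ b := by
    rw [Set.uIoc_of_le hab] at hu
    exact hu.2
  rw [Real.norm_eq_abs]
  linarith [(hp.memS (hsub hu)).abs_tsum_truncSq_mul_dispGen_le (h2 u (hsub hu)) N,
    hp.secondMoment_le h2 (hsub hu) hub]

lemma IsSol.intervalIntegrable_energyRate (hp : IsSol μ p)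
    (h2 : ∀ t, 0 ≤ t → Summable fun n : ℕ => (n : ℝ) ^ 2 * p t n) {T : ℝ}
    (hT : 0 ≤ T) :
    IntervalIntegrable (fun u => energyRate μ (p u)) volume 0 T := by
  rw [intervalIntegrable_iff_integrableOn_Ioc_of_le hT]
  have hsub : Ioc 0 T ⊆ Ici 0 := fun x hx => hx.1.le
  refine Integrable.mono'
    (integrable_const (2 * (secondMoment (p 0) + μ * (2 * μ + 1) * T) + μ * (2 * μ + 1)))
    (aestronglyMeasurable_of_tendsto_ae atTop (fun N =>
      ((hp.continuousOn_tsum_truncSq_mul_dispGen h2 N).aestronglyMeasurable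
        measurableSet_Ici).mono_measure (Measure.restrict_mono hsub le_rfl))
      ((ae_restrict_iff' measurableSet_Ioc).mpr (ae_of_all _ fun u hu =>
        (hp.memS (hsub hu)).tendsto_tsum_truncSq_mul_dispGen (h2 u (hsub hu)))))
    ((ae_restrict_iff' measurableSet_Ioc).mpr (ae_of_all _ fun u hu => ?_))
  rw [Real.norm_eq_abs]
  linarith [(hp.memS (hsub hu)).abs_energyRate_le (h2 u (hsub hu)),
    hp.secondMoment_le h2 (hsub hu) hu.2]

lemma IsSol.hasDerivWithinAt_secondMoment (hp : IsSol μ p)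
    (h2 : ∀ t, 0 ≤ t → Summable fun n : ℕ => (n : ℝ) ^ 2 * p t n) {t : ℝ}
    (ht : 0 ≤ t) :
    HasDerivWithinAt (fun s => secondMoment (p s) - μ) (energyRate μ (p t)) (Ici 0) t := by
  have hE : ∀ s, 0 ≤ s → secondMoment (p s) - secondMoment (p 0)
      = ∫ u in (0 : ℝ)..s, energyRate μ (p u) := fun s hs =>
    hp.secondMoment_sub_eq_integral h2 le_rfl hs
  have hM : ContinuousOn (fun s => secondMoment (p s)) (Ici 0) :=
    continuousOn_Ici_of_sub_eq_integral hE fun s hs => hp.intervalIntegrable_energyRate h2 hs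
  have hrate : ContinuousOn (fun s => energyRate μ (p s)) (Ici 0) :=
    (continuousOn_const.mul (hM.sub continuousOn_const)).add
      (continuousOn_const.mul (continuousOn_const.sub (hp.continuousOn 1)))
  exact (hasDerivWithinAt_Ici_of_sub_eq_integral hE hrate ht).sub_const μ

end solution

theorem energy_dissipation_identity_general (μ : ℝ) :
    (∀ q : ℕ → ℝ, memS μ q → Summable (fun n : ℕ => (n : ℝ) ^ 3 * q n) →
      Summable (fun n : ℕ => |(n : ℝ) ^ 2 * dispGen μ q n|) ∧
      ∑' n : ℕ, (n : ℝ) ^ 2 * dispGen μ q n =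
        -2 * ((∑' n : ℕ, (n : ℝ) ^ 2 * q n) - μ) + 2 * μ * (μ - q 1)) ∧
    (∀ p : ℝ → ℕ → ℝ, IsSol μ p →
      (∀ t, 0 ≤ t → Summable (fun n : ℕ => (n : ℝ) ^ 3 * p t n)) →
      ∀ t, 0 ≤ t →
        HasDerivWithinAt (fun s => (∑' n : ℕ, (n : ℝ) ^ 2 * p s n) - μ)
          (-2 * ((∑' n : ℕ, (n : ℝ) ^ 2 * p t n) - μ) + 2 * μ * (μ - p t 1))
          (Set.Ici 0) t) := by
  refine ⟨fun q hq h3 => ?_, fun p hp h3 t ht => ?_⟩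
  · have h := hq.hasSum_sq_mul_dispGen h3
    exact ⟨summable_abs_iff.mpr h.summable, h.tsum_eq⟩
  · exact hp.hasDerivWithinAt_secondMoment (fun s hs =>
      summable_pow_mul_of_summable_pow_succ_mul (hp.1 s hs) (hp.2.1 s hs).summable (h3 s hs)) ht

theorem energy_dissipation_identity (μ : ℝ) (hμ : 0 < μ) :
    (∀ q : ℕ → ℝ, memS μ q → Summable (fun n : ℕ => (n : ℝ) ^ 3 * q n) →
      Summable (fun n : ℕ => |(n : ℝ) ^ 2 * dispGen μ q n|) ∧
      ∑' n : ℕ, (n : ℝ) ^ 2 * dispGen μ q n =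
        -2 * ((∑' n : ℕ, (n : ℝ) ^ 2 * q n) - μ) + 2 * μ * (μ - q 1)) ∧
    (∀ p : ℝ → ℕ → ℝ, IsSol μ p →
      (∀ t, 0 ≤ t → Summable (fun n : ℕ => (n : ℝ) ^ 3 * p t n)) →
      ∀ t, 0 ≤ t →
        HasDerivWithinAt (fun s => (∑' n : ℕ, (n : ℝ) ^ 2 * p s n) - μ)
          (-2 * ((∑' n : ℕ, (n : ℝ) ^ 2 * p t n) - μ) + 2 * μ * (μ - p t 1))
          (Set.Ici 0) t) :=
  energy_dissipation_identity_general μ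
end

section
/- Let μ = 1 and let p be a classical solution of the mean-field dispersion system with mean 1 whose initial datum has finite second moment E[p(0)] < ∞ and satisfies p_0(0) > 0. Then for all t ≥ 0, E[p(t)] ≤ E[p(0)]·e^{−2t} + 4/(t + 2/p_0(0)) + 2·p_0(0)·e^{−t}. -/
open Finset Filter Topology Real MeasureTheory

/-!
Write `M(t) = ∑ n² pₙ(t)`. Formally `M' = 4 - 2M - 2p₁`, so the energy `E = M - 1` satisfies
`(e^{2t} E)' = 2 e^{2t} (1 - p₁)`. This is made rigorous with the truncated moments
`∑ min(n², (m+1)²) pₙ`: they are finite sums whose derivatives are at most 3, which bounds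
`M(t) ≤ M(0) + 3t`, and dominated convergence passes the exponentially weighted identity to
the limit. At mean 1 every site `n ≥ 2` carries at least twice its mass in the mean, so
`1 - p₁ ≤ 2p₀`; then `p₀' = -(1 - p₁) p₀ ≤ -p₀²` gives `p₀(t) ≤ 1/(t + 1/p₀(0))`. Finally,
with `c = 1/p₀(0) ≥ 1`, `e^{2s}·4/(s + c)` is dominated by the derivative of
`e^{2s} (4/(s + 2c) + (2/c) e^{-s})`.
-/

lemma dispGen_add_two (μ : ℝ) (q : ℕ → ℝ) (n : ℕ) :
    dispGen μ q (n + 2) = ((n : ℝ) + 3) * q (n + 3) - ((n : ℝ) + 2) * q (n + 2)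
      - (μ - q 1) * (q (n + 2) - q (n + 1)) := rfl

lemma sum_range_dispGen (μ : ℝ) (q : ℕ → ℝ) (m : ℕ) :
    ∑ n ∈ range (m + 2), dispGen μ q n
      = ((m : ℝ) + 2) * q (m + 2) - (μ - q 1) * q (m + 1) := by
  induction m with
  | zero => simp only [sum_range_succ, sum_range_zero, dispGen]; push_cast; ring
  | succ m ih =>
    rw [sum_range_succ, ih, dispGen_add_two]
    push_cast
    ring

/-- For a probability vector `q` this is `∑ n, min(n², (m+1)²) * q n`. -/
noncomputable def truncMoment (m : ℕ) (q : ℕ → ℝ) : ℝ :=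
  ∑ n ∈ range (m + 2), ((n : ℝ) ^ 2 - ((m : ℝ) + 1) ^ 2) * q n + ((m : ℝ) + 1) ^ 2

noncomputable def truncDrift (μ : ℝ) (m : ℕ) (q : ℕ → ℝ) : ℝ :=
  ∑ n ∈ range (m + 2), (n : ℝ) * (1 - 2 * n) * q n + q 1
    + (μ - q 1) * ∑ n ∈ range (m + 1), (2 * (n : ℝ) + 1) * q n

lemma sum_range_mul_dispGen (μ : ℝ) (q : ℕ → ℝ) (m : ℕ) :
    ∑ n ∈ range (m + 2), ((n : ℝ) ^ 2 - ((m : ℝ) + 1) ^ 2) * dispGen μ q n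
      = truncDrift μ m q := by
  induction m with
  | zero => simp only [sum_range_succ, sum_range_zero, dispGen, truncDrift]; push_cast; ring
  | succ m ih =>
    have hweight : ∀ n ∈ range (m + 2),
        ((n : ℝ) ^ 2 - (((m + 1 : ℕ) : ℝ) + 1) ^ 2) * dispGen μ q n
          = ((n : ℝ) ^ 2 - ((m : ℝ) + 1) ^ 2) * dispGen μ q n - (2 * m + 3) * dispGen μ q n :=
      fun n _ => by push_cast; ring
    rw [sum_range_succ, sum_congr rfl hweight, sum_sub_distrib, ← mul_sum, ih,
      sum_range_dispGen, dispGen_add_two]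
    simp only [truncDrift, sum_range_succ (n := m + 2), sum_range_succ (n := m + 1)]
    push_cast
    ring

lemma truncMoment_eq (m : ℕ) (q : ℕ → ℝ) : truncMoment m q
    = ∑ n ∈ range (m + 2), (n : ℝ) ^ 2 * q n
      + ((m : ℝ) + 1) ^ 2 * (1 - ∑ n ∈ range (m + 2), q n) := by
  simp only [truncMoment, sub_mul, sum_sub_distrib, ← mul_sum]
  ring

structure IsState (μ : ℝ) (q : ℕ → ℝ) : Prop where
  nonneg : ∀ n, 0 ≤ q n
  hasSum : HasSum q 1
  hasSum_mul : HasSum (fun n : ℕ => (n : ℝ) * q n) μ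

namespace IsState

variable {μ : ℝ} {q : ℕ → ℝ}

lemma sum_le_one (hq : IsState μ q) (s : Finset ℕ) : ∑ n ∈ s, q n ≤ 1 :=
  sum_le_hasSum s (fun n _ => hq.nonneg n) hq.hasSum

lemma le_one (hq : IsState μ q) (n : ℕ) : q n ≤ 1 :=
  le_hasSum hq.hasSum n fun j _ => hq.nonneg j

lemma hasSum_two_mul_add_one (hq : IsState μ q) :
    HasSum (fun n : ℕ => (2 * (n : ℝ) + 1) * q n) (2 * μ + 1) :=
  ((hq.hasSum_mul.mul_left 2).add hq.hasSum).congr_fun fun n => by ring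

lemma le_one_sub (hq : IsState μ q) : q 0 ≤ 1 - q 1 := by
  have := hq.sum_le_one (range 2)
  simp only [sum_range_succ, sum_range_zero, zero_add] at this
  linarith

lemma one_sub_le_two_mul (hq : IsState 1 q) : 1 - q 1 ≤ 2 * q 0 := by
  have hmass : HasSum (fun n => q (n + 2)) (1 - (q 0 + q 1)) := by
    simpa [sum_range_succ] using (hasSum_nat_add_iff' 2).2 hq.hasSum
  have hmean : HasSum (fun n => ((n + 2 : ℕ) : ℝ) * q (n + 2)) (1 - q 1) := by
    simpa [sum_range_succ] using (hasSum_nat_add_iff' 2).2 hq.hasSum_mul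
  have := hasSum_le (fun n => ?_) (hmass.mul_left 2) hmean
  · linarith
  · push_cast
    nlinarith [hq.nonneg (n + 2), (n.cast_nonneg : (0 : ℝ) ≤ n)]

lemma sum_sq_mul_le_truncMoment (hq : IsState μ q) (m : ℕ) :
    ∑ n ∈ range (m + 2), (n : ℝ) ^ 2 * q n ≤ truncMoment m q := by
  rw [truncMoment_eq]
  nlinarith [hq.sum_le_one (range (m + 2))]

lemma truncMoment_nonneg (hq : IsState μ q) (m : ℕ) : 0 ≤ truncMoment m q :=
  (sum_nonneg fun n _ => mul_nonneg (sq_nonneg _) (hq.nonneg n)).trans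
    (hq.sum_sq_mul_le_truncMoment m)

lemma truncMoment_le_tsum (hq : IsState μ q) (hS : Summable fun n : ℕ => (n : ℝ) ^ 2 * q n)
    (m : ℕ) : truncMoment m q ≤ ∑' n : ℕ, (n : ℝ) ^ 2 * q n := by
  have hmass := (hasSum_nat_add_iff' (m + 2)).2 hq.hasSum
  have hmoment := (hasSum_nat_add_iff' (m + 2)).2 hS.hasSum
  have htail := hasSum_le (fun n => ?_) (hmass.mul_left (((m : ℝ) + 1) ^ 2)) hmoment
  · rw [truncMoment_eq]
    linarith
  · gcongr
    · exact hq.nonneg _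
    · push_cast
      linarith [(n.cast_nonneg : (0 : ℝ) ≤ n)]

lemma tendsto_truncMoment (hq : IsState μ q) (hS : Summable fun n : ℕ => (n : ℝ) ^ 2 * q n) :
    Tendsto (fun m => truncMoment m q) atTop (𝓝 (∑' n : ℕ, (n : ℝ) ^ 2 * q n)) :=
  tendsto_of_tendsto_of_tendsto_of_le_of_le
    (hS.hasSum.tendsto_sum_nat.comp (tendsto_add_atTop_nat 2)) tendsto_const_nhds
    hq.sum_sq_mul_le_truncMoment (hq.truncMoment_le_tsum hS)

lemma truncDrift_le (hq : IsState 1 q) (m : ℕ) : truncDrift 1 m q ≤ 3 := by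
  have hquadratic : ∑ n ∈ range (m + 2), (n : ℝ) * (1 - 2 * n) * q n ≤ -q 1 := by
    rw [sum_range_succ', sum_range_succ']
    have htail : ∑ n ∈ range m, ((n + 1 + 1 : ℕ) : ℝ) * (1 - 2 * ((n + 1 + 1 : ℕ) : ℝ))
        * q (n + 1 + 1) ≤ 0 := sum_nonpos fun n _ =>
      mul_nonpos_of_nonpos_of_nonneg
        (mul_nonpos_of_nonneg_of_nonpos (by positivity) (by push_cast; linarith)) (hq.nonneg _)
    norm_num at htail ⊢
    linarith
  have hterm : ∀ n ∈ range (m + 1), 0 ≤ (2 * (n : ℝ) + 1) * q n :=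
    fun n _ => mul_nonneg (by positivity) (hq.nonneg n)
  have hsum : ∑ n ∈ range (m + 1), (2 * (n : ℝ) + 1) * q n ≤ 3 := by
    have := sum_le_hasSum (range (m + 1))
      (fun n _ => mul_nonneg (by positivity) (hq.nonneg n)) hq.hasSum_two_mul_add_one
    norm_num at this
    exact this
  have hlinear : (1 - q 1) * ∑ n ∈ range (m + 1), (2 * (n : ℝ) + 1) * q n ≤ 1 * 3 :=
    mul_le_mul (by linarith [hq.nonneg 1]) hsum (sum_nonneg hterm) zero_le_one
  simp only [truncDrift]
  linarith

lemma neg_two_mul_truncMoment_le_truncDrift (hq : IsState 1 q) (m : ℕ) :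
    -2 * truncMoment m q ≤ truncDrift 1 m q := by
  have hquadratic : -2 * ∑ n ∈ range (m + 2), (n : ℝ) ^ 2 * q n
      ≤ ∑ n ∈ range (m + 2), (n : ℝ) * (1 - 2 * n) * q n := by
    rw [mul_sum]
    exact sum_le_sum fun n _ => by nlinarith [hq.nonneg n, (n.cast_nonneg : (0 : ℝ) ≤ n)]
  have hlinear : 0 ≤ (1 - q 1) * ∑ n ∈ range (m + 1), (2 * (n : ℝ) + 1) * q n :=
    mul_nonneg (hq.nonneg 0 |>.trans hq.le_one_sub)
      (sum_nonneg fun n _ => mul_nonneg (by positivity) (hq.nonneg n))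
  have := hq.sum_sq_mul_le_truncMoment m
  simp only [truncDrift]
  linarith [hq.nonneg 1]

lemma tendsto_truncDrift (hq : IsState μ q) (hS : Summable fun n : ℕ => (n : ℝ) ^ 2 * q n) :
    Tendsto (fun m => truncDrift μ m q) atTop
      (𝓝 (μ - 2 * ∑' n : ℕ, (n : ℝ) ^ 2 * q n + q 1 + (μ - q 1) * (2 * μ + 1))) := by
  have hquadratic : HasSum (fun n : ℕ => (n : ℝ) * (1 - 2 * n) * q n)
      (μ - 2 * ∑' n : ℕ, (n : ℝ) ^ 2 * q n) :=
    (hq.hasSum_mul.sub (hS.hasSum.mul_left 2)).congr_fun fun n => by ring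
  exact ((hquadratic.tendsto_sum_nat.comp (tendsto_add_atTop_nat 2)).add_const _).add
    ((hq.hasSum_two_mul_add_one.tendsto_sum_nat.comp (tendsto_add_atTop_nat 1)).const_mul _)

lemma tendsto_two_mul_truncMoment_sub_one_add_truncDrift (hq : IsState 1 q)
    (hS : Summable fun n : ℕ => (n : ℝ) ^ 2 * q n) :
    Tendsto (fun m => 2 * (truncMoment m q - 1) + truncDrift 1 m q) atTop
      (𝓝 (2 * (1 - q 1))) := by
  convert ((hq.tendsto_truncMoment hS).sub_const 1 |>.const_mul 2).add (hq.tendsto_truncDrift hS)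
    using 2
  ring

lemma abs_two_mul_truncMoment_sub_one_add_truncDrift_le (hq : IsState 1 q) (m : ℕ) :
    |2 * (truncMoment m q - 1) + truncDrift 1 m q| ≤ 2 * truncMoment m q + 2 := by
  have := hq.truncDrift_le m
  have := hq.neg_two_mul_truncMoment_le_truncDrift m
  have := hq.truncMoment_nonneg m
  rw [abs_le]
  constructor <;> linarith

end IsState

lemma monotoneOn_Ici_of_hasDerivWithinAt {f f' : ℝ → ℝ} {a : ℝ}
    (hf : ∀ x ∈ Set.Ici a, HasDerivWithinAt f (f' x) (Set.Ici a) x)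
    (hf' : ∀ x ∈ Set.Ioi a, 0 ≤ f' x) : MonotoneOn f (Set.Ici a) := by
  refine monotoneOn_of_hasDerivWithinAt_nonneg (f' := f') (convex_Ici a)
    (fun x hx => (hf x hx).continuousWithinAt) ?_ ?_ <;> rw [interior_Ici]
  · exact fun x hx => (hf x (Set.Ioi_subset_Ici_self hx)).mono Set.Ioi_subset_Ici_self
  · exact hf'

lemma four_div_add_le {c x : ℝ} (hc : 1 ≤ c) (hx : 0 ≤ x) :
    4 / (x + c) ≤ 8 / (x + 2 * c) - 4 / (x + 2 * c) ^ 2 + 2 / c * exp (-x) := by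
  have hc0 : 0 < c := by linarith
  have hD : 0 < (x + c) * (x + 2 * c) ^ 2 := by positivity
  have hsplit : 4 / (x + c) - (8 / (x + 2 * c) - 4 / (x + 2 * c) ^ 2)
      = 4 * (c * (1 - 2 * x) + x * (1 - x)) / ((x + c) * (x + 2 * c) ^ 2) := by
    field_simp
    ring
  suffices 4 * (c * (1 - 2 * x) + x * (1 - x)) / ((x + c) * (x + 2 * c) ^ 2) ≤ 2 / c * exp (-x) by
    linarith
  rw [div_le_iff₀ hD]
  rcases le_total x 1 with hx1 | hx1
  · have hpoly : 2 * c * (c * (1 - 2 * x) + x * (1 - x))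
        ≤ (1 - x) * ((x + c) * (x + 2 * c) ^ 2) := by
      nlinarith [mul_nonneg hx (sub_nonneg.2 hx1), mul_nonneg (sub_nonneg.2 hc) (sub_nonneg.2 hx1),
        mul_nonneg (mul_nonneg (sub_nonneg.2 hc) (sub_nonneg.2 hx1)) hx]
    have hexp : 1 - x ≤ exp (-x) := by linarith [add_one_le_exp (-x)]
    calc 4 * (c * (1 - 2 * x) + x * (1 - x))
          = 2 / c * (2 * c * (c * (1 - 2 * x) + x * (1 - x))) := by field_simp; ring
      _ ≤ 2 / c * ((1 - x) * ((x + c) * (x + 2 * c) ^ 2)) := by gcongr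
      _ ≤ 2 / c * exp (-x) * ((x + c) * (x + 2 * c) ^ 2) := by
          rw [mul_assoc]; gcongr
  · have : c * (1 - 2 * x) + x * (1 - x) ≤ 0 := by nlinarith
    have : 0 ≤ 2 / c * exp (-x) * ((x + c) * (x + 2 * c) ^ 2) := by positivity
    linarith

lemma integral_exp_mul_le {g : ℝ → ℝ} {c t : ℝ} (hc : 1 ≤ c) (ht : 0 ≤ t)
    (hg : ContinuousOn g (Set.Icc 0 t)) (hle : ∀ s ∈ Set.Icc 0 t, g s ≤ 4 / (s + c)) :
    ∫ s in (0 : ℝ)..t, exp (2 * s) * g s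
      ≤ exp (2 * t) * (4 / (t + 2 * c) + 2 / c * exp (-t)) := by
  have hc0 : 0 < c := by linarith
  have hIcc : ∀ s ∈ Set.uIcc 0 t, 0 ≤ s := fun s hs => by
    rw [Set.uIcc_of_le ht] at hs
    exact hs.1
  have hderiv : ∀ s ∈ Set.uIcc 0 t,
      HasDerivAt (fun s => exp (2 * s) * (4 / (s + 2 * c) + 2 / c * exp (-s)))
        (exp (2 * s) * (8 / (s + 2 * c) - 4 / (s + 2 * c) ^ 2 + 2 / c * exp (-s))) s := by
    intro s hs
    have hs2c : s + 2 * c ≠ 0 := by linarith [hIcc s hs]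
    have hexp : HasDerivAt (fun s : ℝ => exp (2 * s)) (exp (2 * s) * 2) s := by
      simpa using ((hasDerivAt_id s).const_mul 2).exp
    have hfrac := (hasDerivAt_const s (4 : ℝ)).fun_div ((hasDerivAt_id s).add_const (2 * c)) hs2c
    have hdecay : HasDerivAt (fun s : ℝ => exp (-s)) (-exp (-s)) s := by
      simpa using (hasDerivAt_id s).neg.exp
    refine (hexp.fun_mul (hfrac.fun_add (hdecay.const_mul (2 / c)))).congr_deriv ?_
    simp only [id]
    field_simp
    ring
  have hupper : IntervalIntegrable
      (fun s => exp (2 * s) * (8 / (s + 2 * c) - 4 / (s + 2 * c) ^ 2 + 2 / c * exp (-s)))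
      volume 0 t :=
    ContinuousOn.intervalIntegrable
      (by fun_prop (disch := intro s hs; have := hIcc s hs; positivity))
  calc ∫ s in (0 : ℝ)..t, exp (2 * s) * g s
      ≤ ∫ s in (0 : ℝ)..t,
          exp (2 * s) * (8 / (s + 2 * c) - 4 / (s + 2 * c) ^ 2 + 2 / c * exp (-s)) :=
        intervalIntegral.integral_mono_on ht
          ((ContinuousOn.mul (by fun_prop) hg).intervalIntegrable_of_Icc ht) hupper
          fun s hs => mul_le_mul_of_nonneg_left ((hle s hs).trans (four_div_add_le hc hs.1))
            (exp_pos _).le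
    _ = exp (2 * t) * (4 / (t + 2 * c) + 2 / c * exp (-t)) - (4 / (2 * c) + 2 / c) := by
        rw [intervalIntegral.integral_eq_sub_of_hasDerivAt hderiv hupper]
        simp
    _ ≤ exp (2 * t) * (4 / (t + 2 * c) + 2 / c * exp (-t)) := by
        have : 0 ≤ 4 / (2 * c) + 2 / c := by positivity
        linarith

namespace IsSol

variable {μ : ℝ} {p : ℝ → ℕ → ℝ}

lemma isState (hp : IsSol μ p) {t : ℝ} (ht : 0 ≤ t) : IsState μ (p t) :=
  ⟨hp.1 t ht, hp.2.1 t ht, hp.2.2.1 t ht⟩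

lemma hasDerivWithinAt (hp : IsSol μ p) {t : ℝ} (ht : 0 ≤ t) (n : ℕ) :
    HasDerivWithinAt (fun s => p s n) (dispGen μ (p t) n) (Set.Ici 0) t :=
  hp.2.2.2 t ht n

lemma continuousOn_s6 (hp : IsSol μ p) (n : ℕ) : ContinuousOn (fun s => p s n) (Set.Ici 0) :=
  fun _ ht => (hp.hasDerivWithinAt ht n).continuousWithinAt

lemma hasDerivWithinAt_truncMoment (hp : IsSol μ p) (m : ℕ) {t : ℝ} (ht : 0 ≤ t) :
    HasDerivWithinAt (fun s => truncMoment m (p s)) (truncDrift μ m (p t)) (Set.Ici 0) t := by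
  rw [← sum_range_mul_dispGen]
  exact (HasDerivWithinAt.fun_sum fun n _ => (hp.hasDerivWithinAt ht n).const_mul _).add_const _

lemma continuousOn_truncDrift (hp : IsSol μ p) (m : ℕ) :
    ContinuousOn (fun s => truncDrift μ m (p s)) (Set.Ici 0) := by
  have := hp.continuousOn_s6
  unfold truncDrift
  fun_prop

lemma truncMoment_le (hp : IsSol 1 p) (h2 : Summable fun n : ℕ => (n : ℝ) ^ 2 * p 0 n)
    (m : ℕ) {t : ℝ} (ht : 0 ≤ t) :
    truncMoment m (p t) ≤ ∑' n : ℕ, (n : ℝ) ^ 2 * p 0 n + 3 * t := by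
  have hmono : MonotoneOn (fun s => 3 * s - truncMoment m (p s)) (Set.Ici 0) :=
    monotoneOn_Ici_of_hasDerivWithinAt
      (fun s hs => ((hasDerivWithinAt_id s _).const_mul 3).sub
        (hp.hasDerivWithinAt_truncMoment m hs))
      (fun s hs => by linarith [(hp.isState (le_of_lt hs)).truncDrift_le m])
  have hgrowth : 3 * 0 - truncMoment m (p 0) ≤ 3 * t - truncMoment m (p t) :=
    hmono Set.self_mem_Ici ht ht
  linarith [(hp.isState le_rfl).truncMoment_le_tsum h2 m]

lemma summable_sq_mul (hp : IsSol 1 p) (h2 : Summable fun n : ℕ => (n : ℝ) ^ 2 * p 0 n)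
    {t : ℝ} (ht : 0 ≤ t) : Summable fun n : ℕ => (n : ℝ) ^ 2 * p t n := by
  have hq := hp.isState ht
  refine summable_of_sum_range_le (c := ∑' n : ℕ, (n : ℝ) ^ 2 * p 0 n + 3 * t)
    (fun n => mul_nonneg (sq_nonneg _) (hq.nonneg n)) fun m => ?_
  calc ∑ n ∈ range m, (n : ℝ) ^ 2 * p t n
      ≤ ∑ n ∈ range (m + 2), (n : ℝ) ^ 2 * p t n :=
        sum_le_sum_of_subset_of_nonneg (range_subset_range.2 (by omega))
          fun n _ _ => mul_nonneg (sq_nonneg _) (hq.nonneg n)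
    _ ≤ truncMoment m (p t) := hq.sum_sq_mul_le_truncMoment m
    _ ≤ _ := hp.truncMoment_le h2 m ht

lemma continuousOn_truncMoment (hp : IsSol μ p) (m : ℕ) :
    ContinuousOn (fun s => truncMoment m (p s)) (Set.Ici 0) :=
  fun _ ht => (hp.hasDerivWithinAt_truncMoment m ht).continuousWithinAt

lemma continuousOn_exp_mul_truncDrift (hp : IsSol μ p) (m : ℕ) : ContinuousOn
    (fun s => exp (2 * s) * (2 * (truncMoment m (p s) - 1) + truncDrift μ m (p s)))
    (Set.Ici 0) := by
  have := hp.continuousOn_truncMoment m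
  have := hp.continuousOn_truncDrift m
  fun_prop

lemma integral_exp_mul_truncDrift (hp : IsSol μ p) (m : ℕ) {t : ℝ} (ht : 0 ≤ t) :
    ∫ s in (0 : ℝ)..t, exp (2 * s) * (2 * (truncMoment m (p s) - 1) + truncDrift μ m (p s))
      = exp (2 * t) * (truncMoment m (p t) - 1) - (truncMoment m (p 0) - 1) := by
  have hderiv : ∀ s ∈ Set.Ici (0 : ℝ), HasDerivWithinAt
      (fun s => exp (2 * s) * (truncMoment m (p s) - 1))
      (exp (2 * s) * (2 * (truncMoment m (p s) - 1) + truncDrift μ m (p s))) (Set.Ici 0) s := by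
    intro s hs
    have hexp : HasDerivAt (fun s : ℝ => exp (2 * s)) (exp (2 * s) * 2) s := by
      simpa using ((hasDerivAt_id s).const_mul 2).exp
    exact (hexp.hasDerivWithinAt.mul ((hp.hasDerivWithinAt_truncMoment m hs).sub_const 1))
      |>.congr_deriv (by ring)
  rw [intervalIntegral.integral_eq_sub_of_hasDeriv_right_of_le ht
    (fun s hs => (hderiv s hs.1).continuousWithinAt.mono Set.Icc_subset_Ici_self)
    (fun s hs => (hderiv s hs.1.le).mono fun r hr => hs.1.le.trans (le_of_lt hr))
    ((hp.continuousOn_exp_mul_truncDrift m).mono Set.Icc_subset_Ici_self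
      |>.intervalIntegrable_of_Icc ht)]
  simp

lemma tendsto_integral_exp_mul_truncDrift (hp : IsSol 1 p)
    (h2 : Summable fun n : ℕ => (n : ℝ) ^ 2 * p 0 n) {t : ℝ} (ht : 0 ≤ t) :
    Tendsto (fun m => ∫ s in (0 : ℝ)..t,
        exp (2 * s) * (2 * (truncMoment m (p s) - 1) + truncDrift 1 m (p s))) atTop
      (𝓝 (∫ s in (0 : ℝ)..t, exp (2 * s) * (2 * (1 - p s 1)))) := by
  have hIoc : Set.uIoc 0 t ⊆ Set.Ici 0 := by
    rw [Set.uIoc_of_le ht]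
    exact Set.Ioc_subset_Icc_self.trans Set.Icc_subset_Ici_self
  refine intervalIntegral.tendsto_integral_filter_of_dominated_convergence
    (fun _ => exp (2 * t) * (2 * (∑' n : ℕ, (n : ℝ) ^ 2 * p 0 n + 3 * t) + 2))
    (Eventually.of_forall fun m => ((hp.continuousOn_exp_mul_truncDrift m).mono hIoc)
      |>.aestronglyMeasurable measurableSet_uIoc)
    (Eventually.of_forall fun m => ae_of_all _ fun s hs => ?_)
    intervalIntegrable_const
    (ae_of_all _ fun s hs => ?_)
  · have hs0 : 0 ≤ s := hIoc hs
    have hst : s ≤ t := by rw [Set.uIoc_of_le ht] at hs; exact hs.2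
    rw [norm_mul, norm_of_nonneg (exp_pos _).le, norm_eq_abs]
    gcongr
    calc _ ≤ 2 * truncMoment m (p s) + 2 :=
          (hp.isState hs0).abs_two_mul_truncMoment_sub_one_add_truncDrift_le m
      _ ≤ _ := by linarith [hp.truncMoment_le h2 m hs0]
  · have hs0 : 0 ≤ s := hIoc hs
    exact ((hp.isState hs0).tendsto_two_mul_truncMoment_sub_one_add_truncDrift
      (hp.summable_sq_mul h2 hs0)).const_mul _

lemma energy_identity (hp : IsSol 1 p) (h2 : Summable fun n : ℕ => (n : ℝ) ^ 2 * p 0 n)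
    {t : ℝ} (ht : 0 ≤ t) :
    exp (2 * t) * (∑' n : ℕ, (n : ℝ) ^ 2 * p t n - 1)
      - (∑' n : ℕ, (n : ℝ) ^ 2 * p 0 n - 1)
      = ∫ s in (0 : ℝ)..t, exp (2 * s) * (2 * (1 - p s 1)) := by
  refine tendsto_nhds_unique ?_ (hp.tendsto_integral_exp_mul_truncDrift h2 ht)
  simp_rw [hp.integral_exp_mul_truncDrift _ ht]
  exact ((((hp.isState ht).tendsto_truncMoment (hp.summable_sq_mul h2 ht)).sub_const 1).const_mul
    _).sub (((hp.isState le_rfl).tendsto_truncMoment h2).sub_const 1)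

lemma mul_exp_neg_le (hp : IsSol μ p) {t : ℝ} (ht : 0 ≤ t) :
    p 0 0 * exp (-(μ * t)) ≤ p t 0 := by
  have hmono : MonotoneOn (fun s => exp (μ * s) * p s 0) (Set.Ici 0) :=
    monotoneOn_Ici_of_hasDerivWithinAt
      (fun s hs => (((hasDerivAt_id s).const_mul μ).exp.hasDerivWithinAt).mul
        (hp.hasDerivWithinAt hs 0))
      (fun s hs => by
        have h0 := (hp.isState (le_of_lt hs)).nonneg 0
        have h1 := (hp.isState (le_of_lt hs)).nonneg 1
        simp only [dispGen, id, mul_one]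
        nlinarith [exp_pos (μ * s), mul_nonneg (exp_pos (μ * s)).le (mul_nonneg h0 h1)])
  have := hmono Set.self_mem_Ici ht ht
  simp only [mul_zero, exp_zero, one_mul] at this
  rw [exp_neg, ← div_eq_mul_inv, div_le_iff₀ (exp_pos _)]
  linarith

lemma pos_of_pos (hp : IsSol μ p) (h0 : 0 < p 0 0) {t : ℝ} (ht : 0 ≤ t) : 0 < p t 0 :=
  (mul_pos h0 (exp_pos _)).trans_le (hp.mul_exp_neg_le ht)

lemma le_inv_add_inv (hp : IsSol 1 p) (h0 : 0 < p 0 0) {t : ℝ} (ht : 0 ≤ t) :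
    p t 0 ≤ (t + (p 0 0)⁻¹)⁻¹ := by
  have hmono : MonotoneOn (fun s => (p s 0)⁻¹ - s) (Set.Ici 0) :=
    monotoneOn_Ici_of_hasDerivWithinAt
      (fun s hs => ((hp.hasDerivWithinAt hs 0).inv (hp.pos_of_pos h0 hs).ne').sub
        (hasDerivWithinAt_id s _))
      (fun s hs => by
        have hq := hp.isState (le_of_lt hs)
        have hps := hp.pos_of_pos h0 (le_of_lt hs)
        rw [sub_nonneg, dispGen, le_div_iff₀ (by positivity)]
        nlinarith [hq.le_one_sub])
  have := hmono Set.self_mem_Ici ht ht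
  simp only [sub_zero] at this
  rw [le_inv_comm₀ (hp.pos_of_pos h0 ht) (by positivity)]
  linarith

lemma two_mul_one_sub_le (hp : IsSol 1 p) (h0 : 0 < p 0 0) {t : ℝ} (ht : 0 ≤ t) :
    2 * (1 - p t 1) ≤ 4 / (t + (p 0 0)⁻¹) := by
  have := (hp.isState ht).one_sub_le_two_mul
  have := hp.le_inv_add_inv h0 ht
  rw [div_eq_mul_inv]
  linarith

end IsSol

theorem energy_decay_critical (p : ℝ → ℕ → ℝ) (hp : IsSol 1 p)
    (h2 : Summable (fun n : ℕ => (n : ℝ) ^ 2 * p 0 n)) (h0 : 0 < p 0 0) :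
    ∀ t, 0 ≤ t → Summable (fun n : ℕ => (n : ℝ) ^ 2 * p t n) ∧
      (∑' n : ℕ, (n : ℝ) ^ 2 * p t n) - 1 ≤
        ((∑' n : ℕ, (n : ℝ) ^ 2 * p 0 n) - 1) * Real.exp (-2 * t)
          + 4 / (t + 2 / p 0 0) + 2 * p 0 0 * Real.exp (-t) := by
  intro t ht
  refine ⟨hp.summable_sq_mul h2 ht, ?_⟩
  have hc : 1 ≤ (p 0 0)⁻¹ := (one_le_inv₀ h0).2 ((hp.isState le_rfl).le_one 0)
  have hflux := integral_exp_mul_le (g := fun s => 2 * (1 - p s 1)) hc ht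
    ((continuousOn_const.mul (continuousOn_const.sub (hp.continuousOn_s6 1))).mono
      Set.Icc_subset_Ici_self)
    (fun s hs => hp.two_mul_one_sub_le h0 hs.1)
  have hidentity := hp.energy_identity h2 ht
  rw [div_inv_eq_mul, ← div_eq_mul_inv] at hflux
  have hE : exp (2 * t) * exp (-2 * t) = 1 := by rw [← exp_add]; simp
  refine le_of_mul_le_mul_left ?_ (exp_pos (2 * t))
  linear_combination hidentity + hflux - (∑' n : ℕ, (n : ℝ) ^ 2 * p 0 n - 1) * hE
end

section
/- Let μ = 1 and let p be a classical solution of the mean-field dispersion system with mean 1 whose initial datum has finite second moment ∑_{n=0}^∞ n²·p_n(0) < ∞. Then there exists a constant C > 0, depending only on the initial datum, such that for all t > 0, ∑_{n=0}^∞ |p_n(t) − p*_n| ≤ C/t, where p* is the Bernoulli (Dirac) distribution with mean 1, i.e. p*_1 = 1 and p*_n = 0 for n ≠ 1. -/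
open Set

section ProbabilityOnNat

variable {q : ℕ → ℝ}

theorem hasSum_nat_add_two_of_hasSum_one (h1 : HasSum q 1) :
    HasSum (fun n => q (n + 2)) (1 - q 0 - q 1) := by
  have := (hasSum_nat_add_iff' 2).mpr h1
  simpa [Finset.sum_range_succ, sub_sub] using this

theorem add_le_one_of_hasSum_one (hq : ∀ n, 0 ≤ q n) (h1 : HasSum q 1) : q 0 + q 1 ≤ 1 := by
  have := (hasSum_nat_add_two_of_hasSum_one h1).nonneg fun n => hq (n + 2)
  linarith

theorem hasSum_abs_sub_bern_one (hq : ∀ n, 0 ≤ q n) (h1 : HasSum q 1) :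
    HasSum (fun n => |q n - bern 1 n|) (2 * (1 - q 1)) := by
  have htail : HasSum (fun n => |q (n + 2) - bern 1 (n + 2)|) (1 - q 0 - q 1) := by
    simpa [bern, abs_of_nonneg (hq _)] using hasSum_nat_add_two_of_hasSum_one h1
  have hq1 : q 1 ≤ 1 := by linarith [add_le_one_of_hasSum_one hq h1, hq 0]
  have hhead : ∑ n ∈ Finset.range 2, |q n - bern 1 n| = 2 * (1 - q 1) - (1 - q 0 - q 1) := by
    simp only [Finset.sum_range_succ, Finset.sum_range_zero, bern, sub_self, sub_zero, zero_add,
      abs_of_nonneg (hq 0), abs_of_nonpos (sub_nonpos.mpr hq1)]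
    ring
  rwa [← hasSum_nat_add_iff' 2, hhead, sub_sub_cancel]

theorem one_sub_le_two_mul_of_hasSum_mean_one (hq : ∀ n, 0 ≤ q n) (h1 : HasSum q 1)
    (hm : HasSum (fun n : ℕ => (n : ℝ) * q n) 1) : 1 - q 1 ≤ 2 * q 0 := by
  have hmtail : HasSum (fun n : ℕ => ((n : ℝ) + 2) * q (n + 2)) (1 - q 1) := by
    simpa [Finset.sum_range_succ] using (hasSum_nat_add_iff' 2).mpr hm
  have hterm : ∀ n : ℕ, 2 * q (n + 2) ≤ ((n : ℝ) + 2) * q (n + 2) := fun n => by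
    nlinarith [hq (n + 2), (n.cast_nonneg : (0 : ℝ) ≤ n)]
  linarith [hasSum_le hterm ((hasSum_nat_add_two_of_hasSum_one h1).mul_left 2) hmtail]

end ProbabilityOnNat

theorem le_inv_of_hasDerivAt_le_neg_sq {f f' : ℝ → ℝ} {t : ℝ} (ht : 0 < t)
    (hf : ContinuousOn f (Icc 0 t)) (hf' : ∀ s ∈ Ioo 0 t, HasDerivAt f (f' s) s)
    (hle : ∀ s ∈ Ioo 0 t, f' s ≤ -f s ^ 2) : f t ≤ t⁻¹ := by
  rcases le_or_gt (f t) 0 with hft | hft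
  · exact hft.trans (inv_nonneg.mpr ht.le)
  have hanti : AntitoneOn f (Icc 0 t) := by
    refine antitoneOn_of_hasDerivWithinAt_nonpos (f' := f') (convex_Icc 0 t) hf ?_ ?_ <;>
      rw [interior_Icc]
    · exact fun s hs => (hf' s hs).hasDerivWithinAt
    · exact fun s hs => (hle s hs).trans (neg_nonpos.mpr (sq_nonneg _))
  have hpos : ∀ s ∈ Icc 0 t, 0 < f s := fun s hs =>
    hft.trans_le (hanti hs (right_mem_Icc.mpr ht.le) hs.2)
  have hmono : MonotoneOn (fun s => (f s)⁻¹ - s) (Icc 0 t) := by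
    refine monotoneOn_of_hasDerivWithinAt_nonneg (f' := fun s => -f' s / f s ^ 2 - 1)
      (convex_Icc 0 t) ((hf.inv₀ fun s hs => (hpos s hs).ne').sub continuousOn_id) ?_ ?_ <;>
      rw [interior_Icc]
    · exact fun s hs => (((hf' s hs).inv (hpos s (Ioo_subset_Icc_self hs)).ne').sub
        (hasDerivAt_id s)).hasDerivWithinAt
    · intro s hs
      have hfs := hpos s (Ioo_subset_Icc_self hs)
      rw [sub_nonneg, le_div_iff₀ (by positivity)]
      linarith [hle s hs]
  have hgrowth := hmono (left_mem_Icc.mpr ht.le) (right_mem_Icc.mpr ht.le) ht.le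
  have hf0 := hpos 0 (left_mem_Icc.mpr ht.le)
  simp only [sub_zero] at hgrowth
  rw [le_inv_comm₀ hft ht]
  linarith [inv_pos.mpr hf0]

theorem IsSol.hasDerivAt_zero {p : ℝ → ℕ → ℝ} (hp : IsSol 1 p) {t : ℝ} (ht : 0 < t) :
    HasDerivAt (fun s => p s 0) (-(1 - p t 1) * p t 0) t :=
  (hp.2.2.2 t ht.le 0).hasDerivAt (Ici_mem_nhds ht)

theorem IsSol.apply_zero_le_inv {p : ℝ → ℕ → ℝ} (hp : IsSol 1 p) {t : ℝ} (ht : 0 < t) :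
    p t 0 ≤ t⁻¹ := by
  refine le_inv_of_hasDerivAt_le_neg_sq ht (fun s hs => (hp.2.2.2 s hs.1 0).continuousWithinAt.mono
    Icc_subset_Ici_self) (fun s hs => hp.hasDerivAt_zero hs.1) fun s hs => ?_
  have hmass := add_le_one_of_hasSum_one (hp.1 s hs.1.le) (hp.2.1 s hs.1.le)
  nlinarith [hp.1 s hs.1.le 0]

theorem l1_decay_critical_general (p : ℝ → ℕ → ℝ) (hp : IsSol 1 p) :
    ∃ C > 0, ∀ t : ℝ, 0 < t →
      ∑' n : ℕ, |p t n - bern 1 n| ≤ C / t := by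
  refine ⟨4, by norm_num, fun t ht => ?_⟩
  rw [(hasSum_abs_sub_bern_one (hp.1 t ht.le) (hp.2.1 t ht.le)).tsum_eq, div_eq_mul_inv]
  have hoff :=
    one_sub_le_two_mul_of_hasSum_mean_one (hp.1 t ht.le) (hp.2.1 t ht.le) (hp.2.2.1 t ht.le)
  linarith [hp.apply_zero_le_inv ht]

theorem l1_decay_critical (p : ℝ → ℕ → ℝ) (hp : IsSol 1 p)
    (h2 : Summable (fun n : ℕ => (n : ℝ) ^ 2 * p 0 n)) :
    ∃ C > 0, ∀ t : ℝ, 0 < t →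
      ∑' n : ℕ, |p t n - bern 1 n| ≤ C / t :=
  l1_decay_critical_general p hp
end

section
/- Let μ > 0 and let v : [0,∞) → ℝ be a continuous function with 1 ≤ v(t) ≤ e^μ for all t ≥ 0. Let t_0 ≥ 0 and let 1 ≤ m ≤ M ≤ e^μ be such that m ≤ v(t) ≤ M for all t ≥ t_0. Then for all t ≥ t_0, φ(m) − μ·e^{μ + t_0}·e^{−t} ≤ μ·∫_0^t v(s)^{e^{−t+s}}·e^{−t+s} ds ≤ φ(M) + μ·e^{μ + t_0}·e^{−t}, where φ : (0,∞) → ℝ is defined by φ(x) = μ·(x−1)/log x for x ≠ 1 and φ(1) = μ. -/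
/-- The function `φ(x) = μ (x-1)/log x` (with `φ(1) = μ`). -/
noncomputable def phi (μ x : ℝ) : ℝ := if x = 1 then μ else μ * (x - 1) / Real.log x

/-!
Substituting `u = e^{-t+s}` turns the integral into `∫_{e^{-t}}^1 w(u)^u du` with
`w(u) = v(t + log u)`, and `φ(c) = μ ∫_0^1 c^u du`. On `[e^{-t+t₀}, 1]` the integrand lies between
`m^u` and `M^u`; the remaining interval has length at most `e^{-t+t₀}`, and there every integrand
involved is at most `e^μ`.
-/

open Real Set intervalIntegral MeasureTheory

lemma integral_const_rpow {c : ℝ} (hc : 0 < c) (hc1 : c ≠ 1) (a b : ℝ) :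
    ∫ u in a..b, c ^ u = (c ^ b - c ^ a) / log c := by
  have hlog : log c ≠ 0 := log_ne_zero_of_pos_of_ne_one hc hc1
  rw [integral_eq_sub_of_hasDerivAt (f := fun u => c ^ u / log c)
    (fun u _ => by simpa [hlog] using (hasStrictDerivAt_const_rpow hc u).hasDerivAt.div_const (log c))
    ((continuous_const_rpow hc.ne').intervalIntegrable a b)]
  ring

lemma phi_eq_mul_integral_rpow (μ : ℝ) {c : ℝ} (hc : 0 < c) :
    phi μ c = μ * ∫ u in (0:ℝ)..1, c ^ u := by
  unfold phi
  split_ifs with hc1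
  · simp [hc1]
  · rw [integral_const_rpow hc hc1, rpow_one, rpow_zero]
    ring

lemma integral_rpow_le_mul_self {c a : ℝ} (hc : 1 ≤ c) (ha : 0 ≤ a) (ha1 : a ≤ 1) :
    ∫ u in (0:ℝ)..a, c ^ u ≤ a * c :=
  calc ∫ u in (0:ℝ)..a, c ^ u ≤ ∫ _ in (0:ℝ)..a, c :=
        integral_mono_on ha ((continuous_const_rpow (by positivity)).intervalIntegrable _ _)
          intervalIntegrable_const fun u hu => rpow_le_self_of_one_le hc (hu.2.trans ha1)
    _ = a * c := by simp

lemma integral_comp_exp_neg_add_mul (g : ℝ → ℝ) {t : ℝ} (ht : 0 ≤ t)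
    (hg : ContinuousOn g (Icc (exp (-t)) 1)) :
    ∫ s in (0:ℝ)..t, g (exp (-t + s)) * exp (-t + s) = ∫ u in exp (-t)..1, g u := by
  have hderiv (s : ℝ) : HasDerivAt (fun s => exp (-t + s)) (exp (-t + s)) s := by
    simpa using ((hasDerivAt_id s).const_add (-t)).exp
  have hmaps : (fun s => exp (-t + s)) '' uIcc 0 t ⊆ Icc (exp (-t)) 1 := by
    rintro _ ⟨s, hs, rfl⟩
    rw [uIcc_of_le ht] at hs
    exact ⟨exp_le_exp.2 (by linarith [hs.1]), exp_le_one_iff.2 (by linarith [hs.2])⟩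
  simpa using integral_comp_mul_deriv' (fun s _ => hderiv s) (by fun_prop) (hg.mono hmaps)

lemma le_log_of_exp_le {x u : ℝ} (h : exp x ≤ u) : x ≤ log u :=
  (le_log_iff_exp_le ((exp_pos x).trans_le h)).2 h

lemma continuousOn_rpow_comp_add_log {v : ℝ → ℝ} (hv : ContinuousOn v (Ici 0)) (t : ℝ) :
    ContinuousOn (fun u => v (t + log u) ^ u) (Ici (exp (-t))) := by
  have hpos (u : ℝ) (hu : u ∈ Ici (exp (-t))) : 0 < u := (exp_pos _).trans_le hu
  refine ContinuousOn.rpow ?_ continuousOn_id fun u hu => Or.inr (hpos u hu)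
  refine hv.comp (continuousOn_const.add (continuousOn_log.mono fun u hu => (hpos u hu).ne')) ?_
  exact fun u hu => mem_Ici.2 (by linarith [le_log_of_exp_le (mem_Ici.1 hu)])

lemma integral_rpow_exp_neg_add_eq {v : ℝ → ℝ} (hv : ContinuousOn v (Ici 0)) {t : ℝ} (ht : 0 ≤ t) :
    ∫ s in (0:ℝ)..t, v s ^ exp (-t + s) * exp (-t + s) = ∫ u in exp (-t)..1, v (t + log u) ^ u := by
  rw [← integral_comp_exp_neg_add_mul _ ht
    ((continuousOn_rpow_comp_add_log hv t).mono Icc_subset_Ici_self)]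
  simp

section

variable {w : ℝ → ℝ} {a b : ℝ}

lemma integral_rpow_sub_le_integral_rpow {m : ℝ} (hb : 0 ≤ b) (hba : b ≤ a) (ha : a ≤ 1)
    (hint : IntervalIntegrable (fun u => w u ^ u) volume b 1)
    (hw : ∀ u ∈ Icc b a, 0 ≤ w u) (hwm : ∀ u ∈ Icc a 1, m ≤ w u) (hm : 1 ≤ m) :
    (∫ u in (0:ℝ)..1, m ^ u) - a * m ≤ ∫ u in b..1, w u ^ u := by
  have hm_int (x y : ℝ) : IntervalIntegrable (fun u => m ^ u) volume x y :=
    (continuous_const_rpow (by positivity)).intervalIntegrable x y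
  have hint_head : IntervalIntegrable (fun u => w u ^ u) volume b a :=
    hint.mono_set (uIcc_subset_uIcc left_mem_uIcc (mem_uIcc_of_le hba ha))
  have hint_tail : IntervalIntegrable (fun u => w u ^ u) volume a 1 :=
    hint.mono_set (uIcc_subset_uIcc (mem_uIcc_of_le hba ha) right_mem_uIcc)
  have h_head : 0 ≤ ∫ u in b..a, w u ^ u :=
    integral_nonneg hba fun u hu => rpow_nonneg (hw u hu) u
  have h_tail : ∫ u in a..1, m ^ u ≤ ∫ u in a..1, w u ^ u :=
    integral_mono_on ha (hm_int a 1) hint_tail fun u hu =>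
      rpow_le_rpow (by linarith) (hwm u hu) (by linarith [hu.1])
  rw [← integral_add_adjacent_intervals hint_head hint_tail,
    ← integral_add_adjacent_intervals (hm_int 0 a) (hm_int a 1)]
  linarith [integral_rpow_le_mul_self hm (hb.trans hba) ha]

lemma integral_rpow_le_integral_rpow_add {M E : ℝ} (hb : 0 ≤ b) (hba : b ≤ a) (ha : a ≤ 1)
    (hint : IntervalIntegrable (fun u => w u ^ u) volume b 1)
    (hw : ∀ u ∈ Icc b 1, 1 ≤ w u) (hwE : ∀ u ∈ Icc b a, w u ≤ E)
    (hwM : ∀ u ∈ Icc a 1, w u ≤ M) :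
    ∫ u in b..1, w u ^ u ≤ (∫ u in (0:ℝ)..1, M ^ u) + a * E := by
  have hM : 1 ≤ M := (hw 1 ⟨hba.trans ha, le_rfl⟩).trans (hwM 1 ⟨ha, le_rfl⟩)
  have hE : 1 ≤ E := (hw b ⟨le_rfl, hba.trans ha⟩).trans (hwE b ⟨le_rfl, hba⟩)
  have hM_int (x y : ℝ) : IntervalIntegrable (fun u => M ^ u) volume x y :=
    (continuous_const_rpow (by positivity)).intervalIntegrable x y
  have hint_head : IntervalIntegrable (fun u => w u ^ u) volume b a :=
    hint.mono_set (uIcc_subset_uIcc left_mem_uIcc (mem_uIcc_of_le hba ha))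
  have hint_tail : IntervalIntegrable (fun u => w u ^ u) volume a 1 :=
    hint.mono_set (uIcc_subset_uIcc (mem_uIcc_of_le hba ha) right_mem_uIcc)
  have h_head : ∫ u in b..a, w u ^ u ≤ (a - b) * E :=
    calc ∫ u in b..a, w u ^ u ≤ ∫ _ in b..a, E :=
          integral_mono_on hba hint_head intervalIntegrable_const fun u hu =>
            (rpow_le_self_of_one_le (hw u ⟨hu.1, hu.2.trans ha⟩) (hu.2.trans ha)).trans (hwE u hu)
      _ = (a - b) * E := by simp
  have h_tail : ∫ u in a..1, w u ^ u ≤ ∫ u in a..1, M ^ u :=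
    integral_mono_on ha hint_tail (hM_int a 1) fun u hu =>
      rpow_le_rpow (by linarith [hw u ⟨hba.trans hu.1, hu.2⟩]) (hwM u hu) (by linarith [hu.1])
  have h_init : 0 ≤ ∫ u in (0:ℝ)..a, M ^ u :=
    integral_nonneg (hb.trans hba) fun u _ => rpow_nonneg (by positivity) u
  have hbE : 0 ≤ b * E := by positivity
  rw [← integral_add_adjacent_intervals hint_head hint_tail,
    ← integral_add_adjacent_intervals (hM_int 0 a) (hM_int a 1)]
  linarith

end

theorem squeeze_nonlinear_integral (μ : ℝ) (hμ : 0 < μ) (v : ℝ → ℝ)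
    (hcont : ContinuousOn v (Set.Ici 0))
    (hbound : ∀ t : ℝ, 0 ≤ t → 1 ≤ v t ∧ v t ≤ Real.exp μ)
    (t0 : ℝ) (ht0 : 0 ≤ t0) (m M : ℝ) (hm : 1 ≤ m) (hmM : m ≤ M) (hM : M ≤ Real.exp μ)
    (hsq : ∀ t : ℝ, t0 ≤ t → m ≤ v t ∧ v t ≤ M) :
    ∀ t : ℝ, t0 ≤ t →
      (phi μ m - μ * Real.exp (μ + t0) * Real.exp (-t) ≤
        μ * ∫ s in (0:ℝ)..t, (v s) ^ Real.exp (-t + s) * Real.exp (-t + s)) ∧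
      (μ * ∫ s in (0:ℝ)..t, (v s) ^ Real.exp (-t + s) * Real.exp (-t + s) ≤
        phi μ M + μ * Real.exp (μ + t0) * Real.exp (-t)) := by
  intro t ht
  set a := exp (-t + t0)
  have hba : exp (-t) ≤ a := exp_le_exp.2 (by linarith)
  have ha : a ≤ 1 := exp_le_one_iff.2 (by linarith)
  set w : ℝ → ℝ := fun u => v (t + log u)
  have hw_bound (u : ℝ) (hu : u ∈ Icc (exp (-t)) 1) : 1 ≤ w u ∧ w u ≤ exp μ :=
    hbound _ (by linarith [le_log_of_exp_le hu.1])
  have hw_squeeze (u : ℝ) (hu : u ∈ Icc a 1) : m ≤ w u ∧ w u ≤ M :=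
    hsq _ (by linarith [le_log_of_exp_le hu.1])
  have hint : IntervalIntegrable (fun u => w u ^ u) volume (exp (-t)) 1 :=
    ((continuousOn_rpow_comp_add_log hcont t).mono Icc_subset_Ici_self).intervalIntegrable_of_Icc
      (hba.trans ha)
  have hexp : μ * exp (μ + t0) * exp (-t) = μ * (a * exp μ) := by
    rw [mul_assoc, ← exp_add, ← exp_add]; ring_nf
  rw [phi_eq_mul_integral_rpow μ (by linarith), phi_eq_mul_integral_rpow μ (by linarith), hexp,
    integral_rpow_exp_neg_add_eq hcont (ht0.trans ht)]
  constructor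
  · have hlower := integral_rpow_sub_le_integral_rpow (exp_pos _).le hba ha hint
      (fun u hu => by linarith [(hw_bound u ⟨hu.1, hu.2.trans ha⟩).1])
      (fun u hu => (hw_squeeze u hu).1) hm
    have ham : a * m ≤ a * exp μ := by gcongr; linarith
    rw [← mul_sub]
    gcongr
    linarith
  · have hupper := integral_rpow_le_integral_rpow_add (exp_pos _).le hba ha hint
      (fun u hu => (hw_bound u hu).1) (fun u hu => (hw_bound u ⟨hu.1, hu.2.trans ha⟩).2)
      (fun u hu => (hw_squeeze u hu).2)
    rw [← mul_add]
    gcongr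
end

section
/- Let μ > 1, let ν be the unique real number in (μ−1, μ) satisfying (μ − ν)·e^ν = μ, and set L_μ = (μ² − 2μ + μ·e^{1−μ})/(μ−1)². Then: (i) 0 < L_μ < 1; (ii) φ maps the interval [e^{μ−1}, e^μ] into itself; (iii) |φ(x) − φ(y)| ≤ L_μ·|x − y| for all x, y ∈ [e^{μ−1}, e^μ]; (iv) e^ν is the unique fixed point of φ in [e^{μ−1}, e^μ]. -/
open Real Set

noncomputable def psi (t : ℝ) : ℝ := (t - 1 + exp (-t)) / t ^ 2

lemma psi_nonneg (t : ℝ) : 0 ≤ psi t := by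
  have := add_one_le_exp (-t)
  unfold psi
  exact div_nonneg (by linarith) (sq_nonneg t)

lemma psi_pos {t : ℝ} (ht : t ≠ 0) : 0 < psi t := by
  have := add_one_lt_exp (neg_ne_zero.2 ht)
  unfold psi
  exact div_pos (by linarith) (by positivity)

lemma two_sub_mul_exp_le {u : ℝ} (hu : 0 ≤ u) : (2 - u) * exp u ≤ u + 2 := by
  have hmono : Monotone fun v => v + 2 - (2 - v) * exp v := by
    refine monotone_of_hasDerivAt_nonneg (f' := fun v => 1 - (1 - v) * exp v) (fun v => ?_)
      (fun v => ?_)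
    · have h := ((hasDerivAt_id v).add_const 2).sub
        (((hasDerivAt_id v).const_sub 2).mul (hasDerivAt_exp v))
      exact h.congr_deriv (by simp only [id_eq]; ring)
    · have h := mul_le_mul_of_nonneg_right (by linarith [add_one_le_exp (-v)] :
        1 - v ≤ exp (-v)) (exp_pos v).le
      rw [← exp_add, neg_add_cancel, exp_zero] at h
      simp only [Pi.zero_apply]
      linarith
  simpa using hmono hu

lemma hasDerivAt_psi {t : ℝ} (ht : t ≠ 0) :
    HasDerivAt psi ((2 - t - (t + 2) * exp (-t)) / t ^ 3) t := by
  have hnum : HasDerivAt (fun v => v - 1 + exp (-v)) (1 - exp (-t)) t :=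
    (((hasDerivAt_id' t).sub_const 1).fun_add (hasDerivAt_neg t).exp).congr_deriv (by ring)
  have hden : HasDerivAt (fun v => v ^ 2) (2 * t) t := by simpa using hasDerivAt_pow 2 t
  exact (hnum.fun_div hden (pow_ne_zero 2 ht)).congr_deriv (by field_simp; ring)

lemma antitoneOn_psi : AntitoneOn psi (Ioi 0) := by
  refine antitoneOn_of_hasDerivWithinAt_nonpos (convex_Ioi 0)
    (fun t ht => (hasDerivAt_psi (ne_of_gt ht)).continuousAt.continuousWithinAt)
    (fun t ht => (hasDerivAt_psi (ne_of_gt (interior_subset ht))).hasDerivWithinAt) ?_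
  intro t ht
  rw [interior_Ioi, mem_Ioi] at ht
  have key : (2 - t - (t + 2) * exp (-t)) * exp t = (2 - t) * exp t - (t + 2) := by
    rw [sub_mul, mul_assoc, ← exp_add, neg_add_cancel, exp_zero, mul_one]
  have hnum : 2 - t - (t + 2) * exp (-t) ≤ 0 := by
    refine nonpos_of_mul_nonpos_left ?_ (exp_pos t)
    linarith [two_sub_mul_exp_le ht.le, key]
  exact div_nonpos_of_nonpos_of_nonneg hnum (by positivity)

lemma phi_of_ne_one (μ : ℝ) {x : ℝ} (hx : x ≠ 1) : phi μ x = μ * (x - 1) / log x := if_neg hx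

lemma phi_exp (μ : ℝ) {t : ℝ} (ht : t ≠ 0) : phi μ (exp t) = μ * (exp t - 1) / t := by
  rw [phi_of_ne_one μ (mt (exp_eq_one_iff t).1 ht), log_exp]

lemma phi_exp_eq_self {μ t : ℝ} (ht : t ≠ 0) (h : (μ - t) * exp t = μ) :
    phi μ (exp t) = exp t := by
  rw [phi_exp μ ht, div_eq_iff ht]
  linear_combination h

lemma hasDerivAt_phi (μ : ℝ) {x : ℝ} (hx₀ : 0 < x) (hx₁ : x ≠ 1) :
    HasDerivAt (phi μ) (μ * psi (log x)) x := by
  have hlog : log x ≠ 0 := log_ne_zero_of_pos_of_ne_one hx₀ hx₁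
  have h : HasDerivAt (fun y => μ * (y - 1) / log y)
      ((μ * 1 * log x - μ * (x - 1) * x⁻¹) / log x ^ 2) x :=
    (((hasDerivAt_id' x).sub_const 1).const_mul μ).fun_div (hasDerivAt_log hx₀.ne') hlog
  refine (h.congr_of_eventuallyEq ?_).congr_deriv ?_
  · filter_upwards [eventually_ne_nhds hx₁] with y hy using phi_of_ne_one μ hy
  · rw [psi, exp_neg, exp_log hx₀]
    field_simp
    ring

lemma monotoneOn_phi {μ : ℝ} (hμ : 0 ≤ μ) : MonotoneOn (phi μ) (Ioi 1) := by
  have hderiv : ∀ x ∈ Ioi (1 : ℝ), HasDerivAt (phi μ) (μ * psi (log x)) x := fun x hx =>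
    hasDerivAt_phi μ (zero_lt_one.trans hx) (ne_of_gt hx)
  refine monotoneOn_of_hasDerivWithinAt_nonneg (convex_Ioi 1)
    (fun x hx => (hderiv x hx).continuousAt.continuousWithinAt)
    (fun x hx => (hderiv x (interior_subset hx)).hasDerivWithinAt)
    (fun x _ => mul_nonneg hμ (psi_nonneg _))

lemma abs_phi_sub_le {μ s x y : ℝ} (hμ : 0 ≤ μ) (hs : 0 < s) (hx : exp s ≤ x) (hy : exp s ≤ y) :
    |phi μ x - phi μ y| ≤ μ * psi s * |x - y| := by
  have hderiv : ∀ z ∈ Ici (exp s),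
      HasDerivWithinAt (phi μ) (μ * psi (log z)) (Ici (exp s)) z := fun z hz =>
    have hz₁ : 1 < z := (one_lt_exp_iff.2 hs).trans_le hz
    (hasDerivAt_phi μ (zero_lt_one.trans hz₁) (ne_of_gt hz₁)).hasDerivWithinAt
  have hbound : ∀ z ∈ Ici (exp s), ‖μ * psi (log z)‖ ≤ μ * psi s := by
    intro z hz
    have hlog : s ≤ log z := (le_log_iff_exp_le (lt_of_lt_of_le (exp_pos s) hz)).2 hz
    rw [norm_of_nonneg (mul_nonneg hμ (psi_nonneg _))]
    exact mul_le_mul_of_nonneg_left (antitoneOn_psi hs (hs.trans_le hlog) hlog) hμ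
  simpa only [Real.norm_eq_abs] using
    (convex_Ici _).norm_image_sub_le_of_norm_hasDerivWithin_le hderiv hbound hy hx

lemma mapsTo_phi {μ : ℝ} (hμ : 1 < μ) :
    MapsTo (phi μ) (Icc (exp (μ - 1)) (exp μ)) (Icc (exp (μ - 1)) (exp μ)) := by
  intro x hx
  have ha : 1 < exp (μ - 1) := one_lt_exp_iff.2 (by linarith)
  have hx₁ : x ∈ Ioi 1 := ha.trans_le hx.1
  have hmono := monotoneOn_phi (μ := μ) (by linarith)
  constructor
  · calc exp (μ - 1) ≤ phi μ (exp (μ - 1)) := by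
          rw [phi_exp μ (by linarith), le_div_iff₀ (by linarith)]
          nlinarith [add_one_le_exp (μ - 1)]
      _ ≤ phi μ x := hmono ha hx₁ hx.1
  · calc phi μ x ≤ phi μ (exp μ) := hmono hx₁ (hx₁.out.trans_le hx.2) hx.2
      _ = exp μ - 1 := by
          rw [phi_exp μ (by linarith)]
          field_simp
      _ ≤ exp μ := by linarith

lemma mul_psi_sub_one_lt_one {μ : ℝ} (hμ : 1 < μ) : μ * psi (μ - 1) < 1 := by
  have hexp : μ * exp (1 - μ) < 1 := by
    have h := mul_lt_mul_of_pos_right (by linarith [add_one_lt_exp (sub_ne_zero.2 hμ.ne')] :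
      μ < exp (μ - 1)) (exp_pos (1 - μ))
    rwa [← exp_add, sub_add_sub_cancel', sub_self, exp_zero] at h
  rw [psi, neg_sub, mul_div_assoc', div_lt_one (by nlinarith)]
  nlinarith

lemma eq_of_abs_sub_le_mul_abs {x y L : ℝ} (hL : L < 1) (h : |x - y| ≤ L * |x - y|) : x = y := by
  by_contra hne
  have := abs_pos.2 (sub_ne_zero.2 hne)
  nlinarith

theorem phi_contraction (μ : ℝ) (hμ : 1 < μ) (ν : ℝ)
    (hν : ν ∈ Set.Ioo (μ - 1) μ) (hνeq : (μ - ν) * Real.exp ν = μ) :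
    (0 < (μ ^ 2 - 2 * μ + μ * Real.exp (1 - μ)) / (μ - 1) ^ 2 ∧
      (μ ^ 2 - 2 * μ + μ * Real.exp (1 - μ)) / (μ - 1) ^ 2 < 1) ∧
    (∀ x ∈ Set.Icc (Real.exp (μ - 1)) (Real.exp μ),
      phi μ x ∈ Set.Icc (Real.exp (μ - 1)) (Real.exp μ)) ∧
    (∀ x ∈ Set.Icc (Real.exp (μ - 1)) (Real.exp μ),
      ∀ y ∈ Set.Icc (Real.exp (μ - 1)) (Real.exp μ),
        |phi μ x - phi μ y| ≤
          ((μ ^ 2 - 2 * μ + μ * Real.exp (1 - μ)) / (μ - 1) ^ 2) * |x - y|) ∧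
    (phi μ (Real.exp ν) = Real.exp ν ∧
      ∀ x ∈ Set.Icc (Real.exp (μ - 1)) (Real.exp μ), phi μ x = x → x = Real.exp ν) := by
  have hL : (μ ^ 2 - 2 * μ + μ * exp (1 - μ)) / (μ - 1) ^ 2 = μ * psi (μ - 1) := by
    rw [psi, neg_sub]
    ring
  have hLip : ∀ x ∈ Icc (exp (μ - 1)) (exp μ), ∀ y ∈ Icc (exp (μ - 1)) (exp μ),
      |phi μ x - phi μ y| ≤ μ * psi (μ - 1) * |x - y| := fun x hx y hy =>
    abs_phi_sub_le (by linarith) (by linarith) hx.1 hy.1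
  have hfix : phi μ (exp ν) = exp ν := phi_exp_eq_self (by linarith [hν.1] : 0 < ν).ne' hνeq
  have hν_mem : exp ν ∈ Icc (exp (μ - 1)) (exp μ) :=
    ⟨exp_le_exp.2 hν.1.le, exp_le_exp.2 hν.2.le⟩
  rw [hL]
  refine ⟨⟨mul_pos (by linarith) (psi_pos (by linarith)), mul_psi_sub_one_lt_one hμ⟩,
    mapsTo_phi hμ, hLip, hfix, fun x hx hx_fix => ?_⟩
  refine eq_of_abs_sub_le_mul_abs (mul_psi_sub_one_lt_one hμ) ?_
  simpa only [hx_fix, hfix] using hLip x hx _ hν_mem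
end

section
/- Let μ > 1, let ν be the unique real number in (μ−1, μ) satisfying (μ − ν)·e^ν = μ, let c ∈ [0, 1), and set ε_c = (μ·e^{−ν}·(1−c))/(2·(2−c)). Define φ_c(x) = μ·∫_0^∞ x^{e^{−s}}·e^{−(1−c)·s} ds for x ≥ 1. Then ε_c ∈ (0,1), |φ_c(x) − φ_c(y)| ≤ (μ − ε_c)·|x − y| for all x, y ∈ [1, ∞), and |φ_c(x) − φ_c(y)| ≤ (1 − ε_c)·|x − y| for all x, y ∈ [e^ν − ε_c/μ, ∞). -/
open MeasureTheory

/-- The function `φ_c(x) = μ ∫_0^∞ x^{e^{-s}} e^{-(1-c)s} ds`. -/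
noncomputable def phic (μ c x : ℝ) : ℝ :=
  μ * ∫ s in Set.Ioi (0:ℝ), x ^ Real.exp (-s) * Real.exp (-(1 - c) * s)

/-!
Put `u = e^{-s}` and `w = e^{-(1-c)s}`. By the mean value theorem, for `x, y ≥ m` the integrands of
`φ_c(x)` and `φ_c(y)` differ by at most `u m^{u-1} w |x - y|`, so `φ_c` is Lipschitz on `[m, ∞)`
with constant `μ ∫_0^∞ u m^{u-1} w ds`. For `m = 1` this is `μ / (2 - c)`. For `m ≤ e^ν` we use
`m^{u-1} ≤ e^{νu} / m` and `e^{νu} w ≤ e^{νu} - 1 + w`, which integrate in closed form to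
`μ/m · ((e^ν - 1)/ν - (1 - c)/(2 - c))`. The relation `(μ - ν) e^ν = μ` turns `μ (e^ν - 1)/ν`
into `e^ν`, and since `ε_c e^ν` is half of `μ (1 - c)/(2 - c)`, the comparison with
`(1 - ε_c)(e^ν - ε_c/μ)` is elementary.
-/

open Set Real Filter Topology

lemma abs_rpow_sub_rpow_le {m x y a : ℝ} (hm : 0 < m) (hx : m ≤ x) (hy : m ≤ y)
    (ha₀ : 0 ≤ a) (ha₁ : a ≤ 1) :
    |x ^ a - y ^ a| ≤ a * m ^ (a - 1) * |x - y| := by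
  have hderiv : ∀ t ∈ Ici m, HasDerivWithinAt (· ^ a) (a * t ^ (a - 1)) (Ici m) t :=
    fun t ht => (hasDerivAt_rpow_const (Or.inl (hm.trans_le ht).ne')).hasDerivWithinAt
  have hbound : ∀ t ∈ Ici m, ‖a * t ^ (a - 1)‖ ≤ a * m ^ (a - 1) := by
    intro t ht
    have ht₀ : 0 < t := hm.trans_le ht
    rw [norm_of_nonneg (by positivity)]
    exact mul_le_mul_of_nonneg_left (rpow_le_rpow_of_nonpos hm ht (by linarith)) ha₀
  simpa only [norm_eq_abs] using
    (convex_Ici m).norm_image_sub_le_of_norm_hasDerivWithin_le hderiv hbound hy hx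

lemma rpow_le_max_one {x a : ℝ} (hx : 0 ≤ x) (ha₀ : 0 ≤ a) (ha₁ : a ≤ 1) : x ^ a ≤ max x 1 := by
  rcases le_total 1 x with h | h
  · exact (rpow_le_rpow_of_exponent_le h ha₁).trans_eq (rpow_one x) |>.trans (le_max_left _ _)
  · exact (rpow_le_one hx h ha₀).trans (le_max_right _ _)

lemma integrableOn_rpow_exp_neg_mul_exp {x b : ℝ} (hx : 0 ≤ x) (hb : 0 < b) :
    IntegrableOn (fun s => x ^ exp (-s) * exp (-b * s)) (Ioi 0) := by
  refine ((exp_neg_integrableOn_Ioi 0 hb).const_mul (max x 1)).mono' ?_ ?_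
  · exact Measurable.aestronglyMeasurable (by fun_prop)
  · filter_upwards [ae_restrict_mem measurableSet_Ioi] with s hs
    have hu : exp (-s) ≤ 1 := exp_le_one_iff.2 (by linarith [mem_Ioi.1 hs])
    rw [norm_of_nonneg (by positivity)]
    gcongr
    exact rpow_le_max_one hx (exp_pos _).le hu

lemma integral_exp_neg_mul_Ioi_zero {b : ℝ} (hb : 0 < b) :
    ∫ s in Ioi (0:ℝ), exp (-b * s) = b⁻¹ := by
  rw [integral_exp_mul_Ioi (neg_neg_of_pos hb)]
  simp

lemma hasDerivAt_exp_mul_exp_neg {ν : ℝ} (hν : ν ≠ 0) (s : ℝ) :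
    HasDerivAt (fun s => -exp (ν * exp (-s)) / ν) (exp (-s) * exp (ν * exp (-s))) s := by
  refine (((hasDerivAt_neg s).exp.const_mul ν).exp.neg.div_const ν).congr_deriv ?_
  field_simp

lemma tendsto_exp_mul_exp_neg_atTop (ν : ℝ) :
    Tendsto (fun s => -exp (ν * exp (-s)) / ν) atTop (𝓝 (-1 / ν)) := by
  have h : Tendsto (fun s => ν * exp (-s)) atTop (𝓝 0) := by
    simpa using (tendsto_exp_neg_atTop_nhds_zero.const_mul ν)
  simpa using ((continuous_exp.tendsto 0).comp h).neg.div_const ν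

lemma integrableOn_exp_neg_mul_exp_mul_exp_neg {ν : ℝ} (hν : ν ≠ 0) :
    IntegrableOn (fun s => exp (-s) * exp (ν * exp (-s))) (Ioi 0) :=
  integrableOn_Ioi_deriv_of_nonneg' (fun s _ => hasDerivAt_exp_mul_exp_neg hν s)
    (fun _ _ => by positivity) (tendsto_exp_mul_exp_neg_atTop ν)

lemma integral_exp_neg_mul_exp_mul_exp_neg {ν : ℝ} (hν : ν ≠ 0) :
    ∫ s in Ioi (0:ℝ), exp (-s) * exp (ν * exp (-s)) = (exp ν - 1) / ν := by
  rw [integral_Ioi_of_hasDerivAt_of_tendsto' (fun s _ => hasDerivAt_exp_mul_exp_neg hν s)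
    (integrableOn_exp_neg_mul_exp_mul_exp_neg hν) (tendsto_exp_mul_exp_neg_atTop ν)]
  simp only [neg_zero, exp_zero, mul_one]
  ring

lemma abs_phic_sub_le_of_kernel_le {μ c m x y : ℝ} {g : ℝ → ℝ} (hμ : 0 ≤ μ) (hc : c < 1)
    (hm : 0 < m) (hx : m ≤ x) (hy : m ≤ y) (hg : IntegrableOn g (Ioi 0))
    (hkernel : ∀ s ∈ Ioi (0:ℝ), exp (-s) * m ^ (exp (-s) - 1) * exp (-(1 - c) * s) ≤ g s) :
    |phic μ c x - phic μ c y| ≤ μ * (∫ s in Ioi 0, g s) * |x - y| := by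
  have hpt : ∀ s ∈ Ioi (0:ℝ), ‖x ^ exp (-s) * exp (-(1 - c) * s)
      - y ^ exp (-s) * exp (-(1 - c) * s)‖ ≤ g s * |x - y| := by
    intro s hs
    have hu : exp (-s) ≤ 1 := exp_le_one_iff.2 (by linarith [mem_Ioi.1 hs])
    calc _ = |x ^ exp (-s) - y ^ exp (-s)| * exp (-(1 - c) * s) := by
          rw [norm_eq_abs, ← sub_mul, abs_mul, abs_of_pos (exp_pos _)]
      _ ≤ exp (-s) * m ^ (exp (-s) - 1) * |x - y| * exp (-(1 - c) * s) := by
          gcongr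
          exact abs_rpow_sub_rpow_le hm hx hy (exp_pos _).le hu
      _ = exp (-s) * m ^ (exp (-s) - 1) * exp (-(1 - c) * s) * |x - y| := by ring
      _ ≤ g s * |x - y| := by gcongr; exact hkernel s hs
  have hint := norm_integral_le_of_norm_le (hg.mul_const |x - y|)
    ((ae_restrict_iff' measurableSet_Ioi).2 (Eventually.of_forall hpt))
  rw [phic, phic, ← mul_sub, ← integral_sub
    (integrableOn_rpow_exp_neg_mul_exp (hm.trans_le hx).le (sub_pos.2 hc))
    (integrableOn_rpow_exp_neg_mul_exp (hm.trans_le hy).le (sub_pos.2 hc)),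
    abs_mul, abs_of_nonneg hμ, mul_assoc, ← integral_mul_const]
  exact mul_le_mul_of_nonneg_left hint hμ

lemma abs_phic_sub_le_of_one_le {μ c x y : ℝ} (hμ : 0 ≤ μ) (hc : c < 1) (hx : 1 ≤ x)
    (hy : 1 ≤ y) : |phic μ c x - phic μ c y| ≤ μ / (2 - c) * |x - y| := by
  have h2c : 0 < 2 - c := by linarith
  have hkernel : ∀ s ∈ Ioi (0:ℝ),
      exp (-s) * (1:ℝ) ^ (exp (-s) - 1) * exp (-(1 - c) * s) ≤ exp (-(2 - c) * s) := by
    intro s _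
    rw [one_rpow, mul_one, ← exp_add]
    exact (congrArg exp (by ring)).le
  have h := abs_phic_sub_le_of_kernel_le hμ hc one_pos hx hy
    (exp_neg_integrableOn_Ioi 0 h2c) hkernel
  rwa [integral_exp_neg_mul_Ioi_zero h2c, ← div_eq_mul_inv] at h

lemma mul_rpow_sub_one_mul_le {m ν u w : ℝ} (hm : 0 < m) (hmν : m ≤ exp ν) (hν : 0 ≤ ν)
    (hu : 0 ≤ u) (hw₀ : 0 ≤ w) (hw₁ : w ≤ 1) :
    u * m ^ (u - 1) * w ≤ m⁻¹ * (u * exp (ν * u) - u + u * w) := by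
  have hpow : m ^ (u - 1) ≤ m⁻¹ * exp (ν * u) := by
    rw [rpow_sub hm, rpow_one, div_eq_inv_mul]
    gcongr
    calc m ^ u ≤ exp ν ^ u := rpow_le_rpow hm.le hmν hu
      _ = exp (ν * u) := (exp_mul ν u).symm
  have hexp : 1 ≤ exp (ν * u) := one_le_exp (mul_nonneg hν hu)
  calc u * m ^ (u - 1) * w ≤ u * (m⁻¹ * exp (ν * u)) * w := by gcongr
    _ = m⁻¹ * (u * exp (ν * u) * w) := by ring
    _ ≤ m⁻¹ * (u * exp (ν * u) - u + u * w) := by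
        gcongr
        nlinarith [mul_nonneg (mul_nonneg hu (sub_nonneg.2 hexp)) (sub_nonneg.2 hw₁)]

lemma abs_phic_sub_le_of_le_exp {μ c ν m x y : ℝ} (hμ : 0 ≤ μ) (hc : c < 1) (hν : 0 < ν)
    (hm : 0 < m) (hmν : m ≤ exp ν) (hx : m ≤ x) (hy : m ≤ y) :
    |phic μ c x - phic μ c y|
      ≤ μ * m⁻¹ * ((exp ν - 1) / ν - 1 + (2 - c)⁻¹) * |x - y| := by
  have h2c : 0 < 2 - c := by linarith
  have hkernel : ∀ s ∈ Ioi (0:ℝ), exp (-s) * m ^ (exp (-s) - 1) * exp (-(1 - c) * s)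
      ≤ m⁻¹ * (exp (-s) * exp (ν * exp (-s)) - exp (-s) + exp (-(2 - c) * s)) := by
    intro s hs
    have hw : exp (-(1 - c) * s) ≤ 1 := exp_le_one_iff.2 (by nlinarith [mem_Ioi.1 hs])
    have hsplit : exp (-(2 - c) * s) = exp (-s) * exp (-(1 - c) * s) := by
      rw [← exp_add]; ring_nf
    rw [hsplit]
    exact mul_rpow_sub_one_mul_le hm hmν hν.le (exp_pos _).le (exp_pos _).le hw
  have hi₁ := integrableOn_exp_neg_mul_exp_mul_exp_neg hν.ne'
  have hi₂ : IntegrableOn (fun s => exp (-s)) (Ioi (0:ℝ)) := integrableOn_exp_neg_Ioi 0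
  have hi₃ := exp_neg_integrableOn_Ioi 0 h2c
  have hint : IntegrableOn
      (fun s => m⁻¹ * (exp (-s) * exp (ν * exp (-s)) - exp (-s) + exp (-(2 - c) * s))) (Ioi 0) :=
    ((hi₁.sub hi₂).add hi₃).const_mul _
  have h := abs_phic_sub_le_of_kernel_le hμ hc hm hx hy hint hkernel
  rwa [integral_const_mul,
    integral_add (f := fun s => exp (-s) * exp (ν * exp (-s)) - exp (-s)) (hi₁.sub hi₂) hi₃,
    integral_sub hi₁ hi₂,
    integral_exp_neg_mul_exp_mul_exp_neg hν.ne', integral_exp_neg_Ioi_zero,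
    integral_exp_neg_mul_Ioi_zero h2c, ← mul_assoc] at h

lemma mul_inv_mul_le_one_sub {μ ν c ε : ℝ} (hμ : 1 ≤ μ) (hν : 0 < ν)
    (hνeq : (μ - ν) * exp ν = μ) (hc : c < 1) (hε : 0 < ε)
    (hεE : ε * exp ν = μ * (1 - c) / (2 * (2 - c))) (hm : 0 < exp ν - ε / μ) :
    μ * (exp ν - ε / μ)⁻¹ * ((exp ν - 1) / ν - 1 + (2 - c)⁻¹) ≤ 1 - ε := by
  have h2c : 0 < 2 - c := by linarith
  have hS : μ * ((exp ν - 1) / ν - 1 + (2 - c)⁻¹) = exp ν - 2 * (ε * exp ν) := by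
    rw [hεE]
    field_simp
    linear_combination (2 - c) * hνeq
  have hεμ : ε / μ ≤ ε := div_le_self hε.le hμ
  have hεE_le : ε ≤ ε * exp ν := le_mul_of_one_le_right hε.le (one_le_exp hν.le)
  have hεεμ : 0 < ε * (ε / μ) := mul_pos hε (div_pos hε (by linarith))
  rw [mul_comm μ, mul_assoc, hS, inv_mul_le_iff₀ hm]
  linear_combination hεμ + hεE_le + hεεμ

theorem phic_lipschitz (μ : ℝ) (hμ : 1 < μ) (ν : ℝ)
    (hν : ν ∈ Set.Ioo (μ - 1) μ) (hνeq : (μ - ν) * Real.exp ν = μ)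
    (c : ℝ) (hc : c ∈ Set.Ico (0:ℝ) 1) :
    (0 < μ * Real.exp (-ν) * (1 - c) / (2 * (2 - c)) ∧
      μ * Real.exp (-ν) * (1 - c) / (2 * (2 - c)) < 1) ∧
    (∀ x y : ℝ, 1 ≤ x → 1 ≤ y →
      |phic μ c x - phic μ c y| ≤
        (μ - μ * Real.exp (-ν) * (1 - c) / (2 * (2 - c))) * |x - y|) ∧
    (∀ x y : ℝ,
      Real.exp ν - (μ * Real.exp (-ν) * (1 - c) / (2 * (2 - c))) / μ ≤ x →
      Real.exp ν - (μ * Real.exp (-ν) * (1 - c) / (2 * (2 - c))) / μ ≤ y →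
      |phic μ c x - phic μ c y| ≤
        (1 - μ * Real.exp (-ν) * (1 - c) / (2 * (2 - c))) * |x - y|) := by
  obtain ⟨hν₁, -⟩ := hν
  obtain ⟨-, hc₁⟩ := hc
  have hν₀ : 0 < ν := by linarith
  have h1c : 0 < 1 - c := by linarith
  have h2c : 0 < 2 - c := by linarith
  have hμE : μ * exp (-ν) < 1 := by
    rw [exp_neg, ← div_eq_mul_inv, div_lt_one (exp_pos ν)]
    nlinarith [exp_pos ν]
  set ε := μ * exp (-ν) * (1 - c) / (2 * (2 - c)) with hε
  have hε₀ : 0 < ε := div_pos (mul_pos (mul_pos (by linarith) (exp_pos _)) h1c) (by positivity)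
  have hε₁ : ε < 1 := by
    rw [hε, div_lt_one (by positivity)]
    nlinarith
  have hεE : ε * exp ν = μ * (1 - c) / (2 * (2 - c)) := by
    rw [hε, exp_neg]
    field_simp
  refine ⟨⟨hε₀, hε₁⟩, fun x y hx hy => ?_, fun x y hx hy => ?_⟩
  · refine (abs_phic_sub_le_of_one_le (by linarith) hc₁ hx hy).trans
      (mul_le_mul_of_nonneg_right ?_ (abs_nonneg _))
    have hμc : μ / (2 - c) = μ - 2 * (ε * exp ν) := by
      rw [hεE]
      field_simp
      ring
    linarith [le_mul_of_one_le_right hε₀.le (one_le_exp hν₀.le)]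
  · have hεμ : 0 < ε / μ := div_pos hε₀ (by linarith)
    have hm : 0 < exp ν - ε / μ := by
      linarith [div_le_self hε₀.le hμ.le, one_le_exp hν₀.le]
    exact (abs_phic_sub_le_of_le_exp (by linarith) hc₁ hν₀ hm (by linarith) hx hy).trans
      (mul_le_mul_of_nonneg_right (mul_inv_mul_le_one_sub hμ.le hν₀ hνeq hc₁ hε₀ hεE hm)
        (abs_nonneg _))
end
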